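/- arXiv:1406.4466 — 4 statements merged into one kernel-verified Lean document; each statement's English description precedes it below -/
import Mathlib

section
/- Let A and B be n×m integer matrices, let C be an invertible m×m integer matrix, and let D be an m×m integer matrix having at most one nonzero entry in each row, that entry being 1 or −1. Then the (n+m)×(2m) block matrix E = [[A, B], [CD, C]] is a Farkas matrix if and only if the n×m matrix A − BD is a Farkas matrix. -/
noncomputable section

/-- A family of vectors `v i ∈ ℤ^α` (indexed by a finite type `ι`) is Farkas-related. -/
def FarkasRelated {α ι : Type*} [Fintype ι] (v : ι → α → ℤ) : Prop :=
  ∀ a b : ι → ℤ, (∀ i, a i ≤ b i) →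
    ∀ w : α → ℤ, w ∈ Submodule.span ℤ (Set.range v) →
      (∃ x : ι → ℚ, (∀ i, (a i : ℚ) ≤ x i ∧ x i ≤ (b i : ℚ)) ∧
        (fun j => ((w j : ℚ))) = ∑ i, x i • (fun j => ((v i j : ℚ)))) →
      ∃ y : ι → ℤ, (∀ i, a i ≤ y i ∧ y i ≤ b i) ∧ w = ∑ i, y i • v i

/-- An integral matrix is a Farkas matrix if its columns are Farkas-related vectors. -/
def IsFarkasMatrix {α ι : Type*} [Fintype ι] (M : Matrix α ι ℤ) : Prop :=
  FarkasRelated fun j i => M i j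

lemma sum_smul_col_int {α ι : Type*} [Fintype ι] (M : Matrix α ι ℤ) (y : ι → ℤ) :
    (∑ i, y i • fun j => M j i) = M.mulVec y := by
  funext j
  simp [Matrix.mulVec, dotProduct, Finset.sum_apply, mul_comm]

lemma sum_smul_col_rat {α ι : Type*} [Fintype ι] (M : Matrix α ι ℤ) (x : ι → ℚ) :
    (∑ i, x i • fun j => ((M j i : ℚ))) = (M.map (Int.cast : ℤ → ℚ)).mulVec x := by
  funext j
  simp [Matrix.mulVec, dotProduct, Finset.sum_apply, mul_comm]

lemma isFarkasMatrix_iff_mulVec {α ι : Type*} [Fintype ι] (M : Matrix α ι ℤ) :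
    IsFarkasMatrix M ↔ ∀ a b : ι → ℤ, (∀ i, a i ≤ b i) → ∀ w : α → ℤ,
      (∃ c : ι → ℤ, M.mulVec c = w) →
      (∃ x : ι → ℚ, (∀ i, (a i : ℚ) ≤ x i ∧ x i ≤ (b i : ℚ)) ∧
        (M.map (Int.cast : ℤ → ℚ)).mulVec x = fun j => ((w j : ℚ))) →
      ∃ y : ι → ℤ, (∀ i, a i ≤ y i ∧ y i ≤ b i) ∧ M.mulVec y = w := by
  unfold IsFarkasMatrix FarkasRelated
  constructor
  · intro h a b hab w hc hx
    obtain ⟨y, hy1, hy2⟩ := h a b hab w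
      (by rw [Submodule.mem_span_range_iff_exists_fun]
          obtain ⟨c, hc⟩ := hc
          exact ⟨c, by rw [sum_smul_col_int]; exact hc⟩)
      (by obtain ⟨x, hx1, hx2⟩ := hx
          exact ⟨x, hx1, by rw [sum_smul_col_rat, hx2]⟩)
    exact ⟨y, hy1, by rw [← sum_smul_col_int, ← hy2]⟩
  · intro h a b hab w hw hx
    rw [Submodule.mem_span_range_iff_exists_fun] at hw
    obtain ⟨c, hc⟩ := hw
    obtain ⟨y, hy1, hy2⟩ := h a b hab w ⟨c, by rw [← sum_smul_col_int]; exact hc⟩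
      (by obtain ⟨x, hx1, hx2⟩ := hx
          exact ⟨x, hx1, by rw [← sum_smul_col_rat, ← hx2]⟩)
    exact ⟨y, hy1, by rw [← hy2, sum_smul_col_int]⟩

lemma castVec_mulVec {α ι : Type*} [Fintype ι] (M : Matrix α ι ℤ) (v : ι → ℤ) :
    (M.map (Int.cast : ℤ → ℚ)).mulVec (fun i => ((v i : ℚ))) = fun j => ((M.mulVec v j : ℚ)) := by
  funext j
  exact (RingHom.map_mulVec (Int.castRingHom ℚ) M v j).symm

lemma mulVec_row_zero {m : ℕ} {R : Type*} [CommRing R] (D : Matrix (Fin m) (Fin m) R)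
    (i : Fin m) (h : ∀ j, D i j = 0) (t : Fin m → R) : D.mulVec t i = 0 := by
  simp [Matrix.mulVec, dotProduct, h]

lemma mulVec_row_single {m : ℕ} {R : Type*} [CommRing R] (D : Matrix (Fin m) (Fin m) R)
    {i j : Fin m} (h : ∀ k, k ≠ j → D i k = 0) (t : Fin m → R) :
    D.mulVec t i = D i j * t j := by
  show (dotProduct _ _) = _
  unfold dotProduct
  exact Finset.sum_eq_single j
    (fun k _ hk => by show D i k * t k = 0; rw [h k hk, zero_mul]) (by simp)

lemma sum_if_row {m : ℕ} (D : Matrix (Fin m) (Fin m) ℤ) {j k₀ : Fin m}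
    (h : ∀ k, k ≠ k₀ → D j k = 0) (f g : Fin m → ℤ) :
    (∑ k, if D j k = 1 then f k else if D j k = -1 then g k else 0)
      = if D j k₀ = 1 then f k₀ else if D j k₀ = -1 then g k₀ else 0 :=
  Finset.sum_eq_single k₀
    (fun k _ hk => by rw [h k hk]; norm_num) (by simp)

lemma sum_if_row_zero {m : ℕ} (D : Matrix (Fin m) (Fin m) ℤ) {j : Fin m}
    (h : ∀ k, D j k = 0) (f g : Fin m → ℤ) :
    (∑ k, if D j k = 1 then f k else if D j k = -1 then g k else 0) = 0 := by
  simp [h]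

lemma blocks_comp {n m : ℕ} {R : Type*} [CommRing R] (A B : Matrix (Fin n) (Fin m) R)
    (C' C : Matrix (Fin m) (Fin m) R) (z₁ z₂ : Fin m → R) :
    (Matrix.fromBlocks A B C' C).mulVec (Sum.elim z₁ z₂) =
      Sum.elim (A.mulVec z₁ + B.mulVec z₂) (C'.mulVec z₁ + C.mulVec z₂) := by
  rw [Matrix.fromBlocks_mulVec]
  simp

lemma blocks_decomp {n m : ℕ} {R : Type*} [CommRing R] (A B : Matrix (Fin n) (Fin m) R)
    (C' C : Matrix (Fin m) (Fin m) R) (z : Fin m ⊕ Fin m → R) (w : Fin n ⊕ Fin m → R)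
    (h : (Matrix.fromBlocks A B C' C).mulVec z = w) :
    A.mulVec (z ∘ Sum.inl) + B.mulVec (z ∘ Sum.inr) = w ∘ Sum.inl ∧
    C'.mulVec (z ∘ Sum.inl) + C.mulVec (z ∘ Sum.inr) = w ∘ Sum.inr := by
  rw [← Sum.elim_comp_inl_inr z, blocks_comp] at h
  constructor
  · funext i; simpa using congrFun h (Sum.inl i)
  · funext i; simpa using congrFun h (Sum.inr i)

/-- **Proposition 3.6**: with `A, B` integral `n × m` matrices, `C` an invertible
integral `m × m` matrix and `D` an integral `m × m` matrix with at most one nonzero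
entry, equal to `1` or `-1`, in each row, the block matrix `E = [[A, B], [CD, C]]` is a
Farkas matrix iff `A - BD` is a Farkas matrix. -/
theorem blocks_farkas_iff {n m : ℕ} (A B : Matrix (Fin n) (Fin m) ℤ)
    (C D : Matrix (Fin m) (Fin m) ℤ) (hC : IsUnit C.det)
    (hD : ∀ i : Fin m, (∀ j, D i j = 0) ∨
      ∃ j, (D i j = 1 ∨ D i j = -1) ∧ ∀ k, k ≠ j → D i k = 0) :
    IsFarkasMatrix (Matrix.fromBlocks A B (C * D) C) ↔ IsFarkasMatrix (A - B * D) := by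
  classical
  rw [isFarkasMatrix_iff_mulVec, isFarkasMatrix_iff_mulVec]
  have hCiC : C⁻¹ * C = 1 := Matrix.nonsing_inv_mul C hC
  have hCCi : C * C⁻¹ = 1 := Matrix.mul_nonsing_inv C hC
  set Aq := A.map (Int.cast : ℤ → ℚ) with hAq
  set Bq := B.map (Int.cast : ℤ → ℚ) with hBq
  set Cq := C.map (Int.cast : ℤ → ℚ) with hCq
  set Dq := D.map (Int.cast : ℤ → ℚ) with hDqdef
  have hmul : ∀ {p q r : ℕ} (M : Matrix (Fin p) (Fin q) ℤ) (N : Matrix (Fin q) (Fin r) ℤ),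
      (M * N).map (Int.cast : ℤ → ℚ)
        = M.map (Int.cast : ℤ → ℚ) * N.map (Int.cast : ℤ → ℚ) := by
    intro p q r M N
    ext i j
    simp [Matrix.map_apply, Matrix.mul_apply]
  have hEq : (Matrix.fromBlocks A B (C * D) C).map (Int.cast : ℤ → ℚ)
      = Matrix.fromBlocks Aq Bq (Cq * Dq) Cq := by
    rw [Matrix.fromBlocks_map, hmul]
  have hABDq : (A - B * D).map (Int.cast : ℤ → ℚ) = Aq - Bq * Dq := by
    rw [Matrix.map_sub _ (fun a b => by push_cast; ring), hmul]
  have hCiq : (C⁻¹.map (Int.cast : ℤ → ℚ)) * Cq = 1 := by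
    rw [hCq, ← hmul, hCiC]
    exact Matrix.map_one _ (by simp) (by simp)
  constructor
  · -- E Farkas → A - BD Farkas
    intro hE a b hab w hc hx
    obtain ⟨c, hc⟩ := hc
    obtain ⟨x, hxb, hxe⟩ := hx
    rw [hABDq] at hxe
    set lo : Fin m → ℤ :=
      fun j => ∑ k, if D j k = 1 then -(b k) else if D j k = -1 then a k else 0 with hlo
    set hi : Fin m → ℤ :=
      fun j => ∑ k, if D j k = 1 then -(a k) else if D j k = -1 then b k else 0 with hhi
    have hab' : ∀ i, Sum.elim a lo i ≤ Sum.elim b hi i := by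
      rintro (k | j)
      · exact hab k
      · simp only [Sum.elim_inr, hlo, hhi]
        rcases hD j with h0 | ⟨k₀, hk₀, hrest⟩
        · rw [sum_if_row_zero D h0, sum_if_row_zero D h0]
        · rw [sum_if_row D hrest, sum_if_row D hrest]
          rcases hk₀ with h1 | h1 <;> rw [h1] <;> norm_num <;> exact hab k₀
    have e2 : (C * D).mulVec c + C.mulVec (-(D.mulVec c)) = 0 := by
      rw [Matrix.mulVec_neg, Matrix.mulVec_mulVec]
      abel
    have e1 : A.mulVec c + B.mulVec (-(D.mulVec c)) = (A - B * D).mulVec c := by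
      rw [Matrix.sub_mulVec, Matrix.mulVec_neg, Matrix.mulVec_mulVec, sub_eq_add_neg]
    have hmem : (Matrix.fromBlocks A B (C * D) C).mulVec (Sum.elim c (-(D.mulVec c)))
        = Sum.elim w 0 := by
      rw [blocks_comp, e1, e2, hc]
    have hratb : ∀ i, (((Sum.elim a lo i : ℤ) : ℚ)) ≤ Sum.elim x (-(Dq.mulVec x)) i ∧
        Sum.elim x (-(Dq.mulVec x)) i ≤ (((Sum.elim b hi i : ℤ) : ℚ)) := by
      rintro (k | j)
      · exact hxb k
      · simp only [Sum.elim_inr, hlo, hhi, Pi.neg_apply]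
        rcases hD j with h0 | ⟨k₀, hk₀, hrest⟩
        · rw [sum_if_row_zero D h0, sum_if_row_zero D h0,
            mulVec_row_zero Dq j (fun k => by simp [hDqdef, Matrix.map_apply, h0 k]) x]
          norm_num
        · have hv : Dq.mulVec x j = ((D j k₀ : ℚ)) * x k₀ := by
            rw [mulVec_row_single Dq (i := j) (j := k₀)
              (fun k' hk' => by simp [hDqdef, Matrix.map_apply, hrest k' hk']) x]
            simp [hDqdef, Matrix.map_apply]
          rw [sum_if_row D hrest, sum_if_row D hrest, hv]
          have := hxb k₀
          rcases hk₀ with h1 | h1 <;> rw [h1] <;> norm_num <;> push_cast <;>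
            constructor <;> linarith [this.1, this.2]
    have hrate : ((Matrix.fromBlocks A B (C * D) C).map (Int.cast : ℤ → ℚ)).mulVec
        (Sum.elim x (-(Dq.mulVec x))) = fun j => (((Sum.elim w 0 j : ℤ) : ℚ)) := by
      rw [hEq, blocks_comp]
      have e1q : Aq.mulVec x + Bq.mulVec (-(Dq.mulVec x)) = (Aq - Bq * Dq).mulVec x := by
        rw [Matrix.sub_mulVec, Matrix.mulVec_neg, Matrix.mulVec_mulVec, sub_eq_add_neg]
      have e2q : (Cq * Dq).mulVec x + Cq.mulVec (-(Dq.mulVec x)) = 0 := by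
        rw [Matrix.mulVec_neg, Matrix.mulVec_mulVec]
        abel
      rw [e1q, e2q, hxe]
      funext i
      cases i <;> simp
    obtain ⟨y, hyb, hye⟩ := hE (Sum.elim a lo) (Sum.elim b hi) hab' (Sum.elim w 0)
      ⟨Sum.elim c (-(D.mulVec c)), hmem⟩ ⟨Sum.elim x (-(Dq.mulVec x)), hratb, hrate⟩
    obtain ⟨hy1, hy2⟩ := blocks_decomp A B (C * D) C y (Sum.elim w 0) hye
    have hinj : ∀ v : Fin m → ℤ, C.mulVec v = 0 → v = 0 := by
      intro v hv
      have h : (C⁻¹ * C).mulVec v = C⁻¹.mulVec 0 := by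
        rw [← Matrix.mulVec_mulVec, hv]
      simpa [hCiC, Matrix.one_mulVec, Matrix.mulVec_zero] using h
    have hy2' : D.mulVec (y ∘ Sum.inl) + (y ∘ Sum.inr) = 0 := by
      apply hinj
      rw [Matrix.mulVec_add, Matrix.mulVec_mulVec]
      have : (Sum.elim w 0 : Fin n ⊕ Fin m → ℤ) ∘ Sum.inr = 0 := by funext i; simp
      rw [← this]; exact hy2
    have hyinr : (y ∘ Sum.inr) = -(D.mulVec (y ∘ Sum.inl)) := by
      funext i
      have := congrFun hy2' i
      simp only [Pi.add_apply, Pi.zero_apply, Pi.neg_apply] at this ⊢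
      linarith
    refine ⟨y ∘ Sum.inl, fun k => hyb (Sum.inl k), ?_⟩
    have : (Sum.elim w 0 : Fin n ⊕ Fin m → ℤ) ∘ Sum.inl = w := by funext i; simp
    rw [← this, ← hy1, hyinr, Matrix.sub_mulVec, Matrix.mulVec_neg, Matrix.mulVec_mulVec,
      sub_eq_add_neg]
  · -- A - BD Farkas → E Farkas
    intro hF a b hab w hz hx
    obtain ⟨z, hz⟩ := hz
    obtain ⟨x, hxb, hxe⟩ := hx
    rw [hEq] at hxe
    obtain ⟨u, hudef⟩ : ∃ u : Fin m → ℤ, u = C⁻¹.mulVec (w ∘ Sum.inr) := ⟨_, rfl⟩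
    have hCu : C.mulVec u = w ∘ Sum.inr := by
      rw [hudef, Matrix.mulVec_mulVec, hCCi, Matrix.one_mulVec]
    obtain ⟨hz1, hz2⟩ := blocks_decomp A B (C * D) C z w hz
    obtain ⟨hx1, hx2⟩ := blocks_decomp Aq Bq (Cq * Dq) Cq x _ hxe
    -- integer identity: D z₁ + z₂ = u
    have hu : D.mulVec (z ∘ Sum.inl) + (z ∘ Sum.inr) = u := by
      have h : C.mulVec (D.mulVec (z ∘ Sum.inl) + (z ∘ Sum.inr)) = w ∘ Sum.inr := by
        rw [Matrix.mulVec_add, Matrix.mulVec_mulVec]; exact hz2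
      have h2 : C⁻¹.mulVec (C.mulVec (D.mulVec (z ∘ Sum.inl) + (z ∘ Sum.inr)))
          = D.mulVec (z ∘ Sum.inl) + (z ∘ Sum.inr) := by
        rw [Matrix.mulVec_mulVec, hCiC, Matrix.one_mulVec]
      rw [h, ← hudef] at h2
      exact h2.symm
    -- rational identity: Dq x₁ + x₂ = u (cast)
    have hCuq : Cq.mulVec (fun j => ((u j : ℚ))) = fun i => ((w (Sum.inr i) : ℚ)) := by
      rw [castVec_mulVec C u]
      funext i
      rw [hCu]
      rfl
    have hqu : Dq.mulVec (x ∘ Sum.inl) + (x ∘ Sum.inr) = fun j => ((u j : ℚ)) := by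
      have hCv : Cq.mulVec (Dq.mulVec (x ∘ Sum.inl) + (x ∘ Sum.inr))
          = Cq.mulVec (fun j => ((u j : ℚ))) := by
        rw [Matrix.mulVec_add, Matrix.mulVec_mulVec, hCuq]
        exact hx2
      have h2 := congrArg (fun v => (C⁻¹.map (Int.cast : ℤ → ℚ)).mulVec v) hCv
      simpa [Matrix.mulVec_mulVec, hCiq, Matrix.one_mulVec] using h2
    have hqup : ∀ j, Dq.mulVec (x ∘ Sum.inl) j + x (Sum.inr j) = ((u j : ℚ)) := by
      intro j
      have := congrFun hqu j
      simpa using this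
    -- bounds
    set L : Fin m → Fin m → ℤ := fun j k =>
      if D j k = 1 then u j - b (Sum.inr j) else if D j k = -1 then a (Sum.inr j) - u j
      else a (Sum.inl k) with hLdef
    set U : Fin m → Fin m → ℤ := fun j k =>
      if D j k = 1 then u j - a (Sum.inr j) else if D j k = -1 then b (Sum.inr j) - u j
      else b (Sum.inl k) with hUdef
    have hLU : ∀ j k, ((L j k : ℚ)) ≤ x (Sum.inl k) ∧ x (Sum.inl k) ≤ ((U j k : ℚ)) := by
      intro j k
      by_cases h1 : D j k = 1
      · obtain ⟨k₀, hk₀, hrest⟩ : ∃ k₀, (D j k₀ = 1 ∨ D j k₀ = -1) ∧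
            ∀ k', k' ≠ k₀ → D j k' = 0 := by
          rcases hD j with h0 | h
          · rw [h0 k] at h1; exact absurd h1 (by norm_num)
          · exact h
        have hkk : k = k₀ := by
          by_contra hne
          rw [hrest k hne] at h1
          exact absurd h1 (by norm_num)
        subst hkk
        have hv : Dq.mulVec (x ∘ Sum.inl) j = x (Sum.inl k) := by
          rw [mulVec_row_single Dq (i := j) (j := k)
            (fun k' hk' => by simp [hDqdef, Matrix.map_apply, hrest k' hk']) _]
          simp [hDqdef, Matrix.map_apply, h1]
        have h2 := hqup j
        rw [hv] at h2
        have hb2 := hxb (Sum.inr j)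
        simp only [hLdef, hUdef, if_pos h1]
        constructor <;> push_cast <;> linarith [hb2.1, hb2.2]
      · by_cases h2 : D j k = -1
        · obtain ⟨k₀, hk₀, hrest⟩ : ∃ k₀, (D j k₀ = 1 ∨ D j k₀ = -1) ∧
              ∀ k', k' ≠ k₀ → D j k' = 0 := by
            rcases hD j with h0 | h
            · rw [h0 k] at h2; exact absurd h2 (by norm_num)
            · exact h
          have hkk : k = k₀ := by
            by_contra hne
            rw [hrest k hne] at h2
            exact absurd h2 (by norm_num)
          subst hkk
          have hv : Dq.mulVec (x ∘ Sum.inl) j = -(x (Sum.inl k)) := by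
            rw [mulVec_row_single Dq (i := j) (j := k)
              (fun k' hk' => by simp [hDqdef, Matrix.map_apply, hrest k' hk']) _]
            simp [hDqdef, Matrix.map_apply, h2]
          have h3 := hqup j
          rw [hv] at h3
          have hb2 := hxb (Sum.inr j)
          simp only [hLdef, hUdef, if_neg h1, if_pos h2]
          constructor <;> push_cast <;> linarith [hb2.1, hb2.2]
        · simp only [hLdef, hUdef, if_neg h1, if_neg h2]
          exact hxb (Sum.inl k)
    set a' : Fin m → ℤ := fun k =>
      max (Finset.univ.sup' ⟨k, Finset.mem_univ k⟩ fun j => L j k) (a (Sum.inl k)) with ha'def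
    set b' : Fin m → ℤ := fun k =>
      min (Finset.univ.inf' ⟨k, Finset.mem_univ k⟩ fun j => U j k) (b (Sum.inl k)) with hb'def
    have ha'x : ∀ k, ((a' k : ℚ)) ≤ x (Sum.inl k) := by
      intro k
      obtain ⟨j, _, hj⟩ := Finset.exists_mem_eq_sup'
        (⟨k, Finset.mem_univ k⟩ : (Finset.univ : Finset (Fin m)).Nonempty) (fun j => L j k)
      simp only [ha'def, hj]
      push_cast
      exact max_le (hLU j k).1 (hxb (Sum.inl k)).1
    have hb'x : ∀ k, x (Sum.inl k) ≤ ((b' k : ℚ)) := by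
      intro k
      obtain ⟨j, _, hj⟩ := Finset.exists_mem_eq_inf'
        (⟨k, Finset.mem_univ k⟩ : (Finset.univ : Finset (Fin m)).Nonempty) (fun j => U j k)
      simp only [hb'def, hj]
      push_cast
      exact le_min (hLU j k).2 (hxb (Sum.inl k)).2
    have hab' : ∀ k, a' k ≤ b' k := by
      intro k
      exact_mod_cast (ha'x k).trans (hb'x k)
    -- membership for A - BD
    have hzw' : (A - B * D).mulVec (z ∘ Sum.inl) = (w ∘ Sum.inl) - B.mulVec u := by
      have hDz : D.mulVec (z ∘ Sum.inl) = u - (z ∘ Sum.inr) := by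
        rw [← hu]; abel
      rw [Matrix.sub_mulVec, ← Matrix.mulVec_mulVec, hDz, Matrix.mulVec_sub, ← hz1]
      abel
    -- rational solution for A - BD
    have hrateq : ((A - B * D).map (Int.cast : ℤ → ℚ)).mulVec (x ∘ Sum.inl)
        = fun i => ((((w ∘ Sum.inl) - B.mulVec u) i : ℚ)) := by
      have hDxq : Dq.mulVec (x ∘ Sum.inl) = (fun j => ((u j : ℚ))) - (x ∘ Sum.inr) := by
        rw [← hqu]; abel
      rw [hABDq, Matrix.sub_mulVec, ← Matrix.mulVec_mulVec, hDxq, Matrix.mulVec_sub,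
        castVec_mulVec B u]
      funext i
      have h1 := congrFun hx1 i
      simp only [Pi.add_apply, Pi.sub_apply, Function.comp_apply] at h1 ⊢
      push_cast
      linarith
    obtain ⟨y₁, hy₁b, hy₁e⟩ := hF a' b' hab' ((w ∘ Sum.inl) - B.mulVec u)
      ⟨z ∘ Sum.inl, hzw'⟩ ⟨x ∘ Sum.inl, fun k => ⟨ha'x k, hb'x k⟩, hrateq⟩
    refine ⟨Sum.elim y₁ (u - D.mulVec y₁), ?_, ?_⟩
    · rintro (k | j)
      · simp only [Sum.elim_inl]
        constructor
        · exact le_trans (by rw [ha'def]; exact le_max_right _ _) (hy₁b k).1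
        · exact le_trans (hy₁b k).2 (by rw [hb'def]; exact min_le_right _ _)
      · simp only [Sum.elim_inr, Pi.sub_apply]
        rcases hD j with h0 | ⟨k₀, hk₀, hrest⟩
        · rw [mulVec_row_zero D j h0 y₁, sub_zero]
          have hq0 : Dq.mulVec (x ∘ Sum.inl) j = 0 :=
            mulVec_row_zero Dq j (fun k => by simp [hDqdef, Matrix.map_apply, h0 k]) _
          have h2 := hqup j
          rw [hq0, zero_add] at h2
          have hb2 := hxb (Sum.inr j)
          rw [h2] at hb2
          exact ⟨by exact_mod_cast hb2.1, by exact_mod_cast hb2.2⟩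
        · have hyk := hy₁b k₀
          have hLa : L j k₀ ≤ a' k₀ := by
            rw [ha'def]
            exact le_trans (Finset.le_sup' (fun j => L j k₀) (Finset.mem_univ j)) (le_max_left _ _)
          have hUb : b' k₀ ≤ U j k₀ := by
            rw [hb'def]
            exact le_trans (min_le_left _ _) (Finset.inf'_le (fun j => U j k₀) (Finset.mem_univ j))
          rcases hk₀ with h1 | h1
          · rw [mulVec_row_single D hrest y₁, h1, one_mul]
            rw [hLdef] at hLa
            rw [hUdef] at hUb
            simp only [if_pos h1] at hLa hUb
            constructor <;> linarith [hyk.1, hyk.2, hLa, hUb]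
          · rw [mulVec_row_single D hrest y₁, h1]
            rw [hLdef] at hLa
            rw [hUdef] at hUb
            have h1' : ¬ (D j k₀ = 1) := by rw [h1]; norm_num
            simp only [if_neg h1', if_pos h1] at hLa hUb
            simp only [neg_one_mul, sub_neg_eq_add]
            constructor <;> linarith [hyk.1, hyk.2, hLa, hUb]
    · rw [blocks_comp]
      have t2 : (C * D).mulVec y₁ + C.mulVec (u - D.mulVec y₁) = w ∘ Sum.inr := by
        rw [Matrix.mulVec_sub, Matrix.mulVec_mulVec, hCu]
        abel
      have t1 : A.mulVec y₁ + B.mulVec (u - D.mulVec y₁) = w ∘ Sum.inl := by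
        have h := hy₁e
        rw [Matrix.sub_mulVec, ← Matrix.mulVec_mulVec] at h
        rw [Matrix.mulVec_sub]
        funext i
        have := congrFun h i
        simp only [Pi.add_apply, Pi.sub_apply, Function.comp_apply] at this ⊢
        linarith
      rw [t1, t2, Sum.elim_comp_inl_inr]
end
end

section
/- Let G be a connected bipartite simple graph with vertex set {1,...,n} and bipartition ({1,...,r},{r+1,...,n}). Then the set of G-indecomposable points in ℝP_+^{n-1} consists exactly of the points [±u_{I,J}], where u_{I,J} = ((|I|+|J|)/n)·(−Σ_{i=1}^r f_i + Σ_{i=r+1}^n f_i) + Σ_{i∈I} f_i − Σ_{j∈J} f_j, and I ⊆ {1,...,r}, J ⊆ {r+1,...,n} are sets such that the induced subgraph of G on I ∪ J and the induced subgraph of G on ({1,...,r}\I) ∪ ({r+1,...,n}\J) are both connected. -/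
/-!
Write `η = bipSign r` for the `±1` vector of the bipartition. Since `G` is connected and
bipartite, the edge vectors span the hyperplane `η ⬝ᵥ · = 0`, and `u ⬝ᵥ v(ij) = u i + u j`.

For any finite family, `u` is indecomposable iff it is rigid: every `w` in the span that is
orthogonal to the family members orthogonal to `u` is a multiple of `u` (otherwise
`u = (u/2 + εw) + (u/2 - εw)` is a decomposition for small `ε > 0`). For edge vectors, `w` kills
the edges killed by `u` iff `k ↦ w k * η k` is constant on each component of the graph `G₀` of
those edges. With one component, `u` would be a multiple of `η`, which is not in the hyperplane.
For two components `C ≠ C'`, the balanced combination `|C'| η 1_C - |C| η 1_C'` is such a `w`,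
so rigidity forces `u` to vanish outside `C ∪ C'`. Hence `G₀` has exactly two components; they
induce connected subgraphs of `G`, and `u` is a nonzero multiple of the vector `u_{I,J}` of the
cut they form. Conversely, the same computation shows that these multiples are rigid.
-/

open scoped Classical

noncomputable section

/-- The standard inner product on `ℝ^n`. -/
def dotR {n : ℕ} (u v : Fin n → ℝ) : ℝ := ∑ i, u i * v i

/-- `[u] = [u']` : positive equivalence of nonzero vectors (`u' = r • u` with `r > 0`). -/
def PosEq {n : ℕ} (u u' : Fin n → ℝ) : Prop := ∃ r : ℝ, 0 < r ∧ u' = r • u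

/-- `u` is decomposable with respect to the set of vectors `S`. -/
def Decomp {n : ℕ} (S : Set (Fin n → ℝ)) (u : Fin n → ℝ) : Prop :=
  ∃ u' u'' : Fin n → ℝ, u' ≠ 0 ∧ u'' ≠ 0 ∧
    u' ∈ Submodule.span ℝ S ∧ u'' ∈ Submodule.span ℝ S ∧
    u = u' + u'' ∧ ¬ PosEq u u' ∧ ¬ PosEq u u'' ∧
    ∀ x ∈ S, 0 ≤ dotR u' x * dotR u'' x

/-- `u` is indecomposable with respect to the set of vectors `S`. -/
def Indecomp {n : ℕ} (S : Set (Fin n → ℝ)) (u : Fin n → ℝ) : Prop :=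
  u ≠ 0 ∧ u ∈ Submodule.span ℝ S ∧ ¬ Decomp S u

/-- The column `v(e) = f_i + f_j` of the incidence matrix corresponding to an edge
`e = ij`. -/
def edgeVec {n : ℕ} (e : Sym2 (Fin n)) : Fin n → ℝ := fun k => if k ∈ e then 1 else 0

/-- The set of columns of the incidence matrix of `G`. -/
def edgeVecs {n : ℕ} (G : SimpleGraph (Fin n)) : Set (Fin n → ℝ) := edgeVec '' G.edgeSet

/-- The vector `u_{I,J} = ((|I|+|J|)/n)(-∑_{i<r} f_i + ∑_{i≥r} f_i) + ∑_{i∈I} f_i -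
∑_{j∈J} f_j`, for the bipartition of `{0,…,n-1}` into `{i < r}` and `{i ≥ r}`. -/
def uIJ {n : ℕ} (r : ℕ) (I J : Finset (Fin n)) : Fin n → ℝ := fun k =>
  ((I.card + J.card : ℝ) / n) * (if (k : ℕ) < r then -1 else 1) +
    (if k ∈ I then 1 else 0) - (if k ∈ J then 1 else 0)

open Filter Topology Submodule
open scoped Finset

section Indecomposable

variable {n : ℕ} {S : Set (Fin n → ℝ)} {u w : Fin n → ℝ}

lemma half_add_smul_ne_smul (hwu : ∀ t : ℝ, w ≠ t • u) {δ : ℝ} (hδ : δ ≠ 0) (c : ℝ) :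
    (2⁻¹ : ℝ) • u + δ • w ≠ c • u := by
  intro h
  apply hwu (δ⁻¹ * (c - 2⁻¹))
  rw [mul_smul, sub_smul, ← h, add_sub_cancel_left, smul_smul, inv_mul_cancel₀ hδ, one_smul]

lemma decomp_of_not_rigid (hS : S.Finite) (hu : u ∈ span ℝ S) (hw : w ∈ span ℝ S)
    (hcompat : ∀ x ∈ S, u ⬝ᵥ x = 0 → w ⬝ᵥ x = 0) (hwu : ∀ t : ℝ, w ≠ t • u) :
    Decomp S u := by
  -- for small `ε`, the perturbations `u / 2 ± ε w` keep the sign of `u` on every `x ∈ S`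
  have hsmall : ∀ᶠ ε in 𝓝[>] (0 : ℝ), 0 < ε ∧ ∀ x ∈ S, (ε * (w ⬝ᵥ x)) ^ 2 ≤ (u ⬝ᵥ x / 2) ^ 2 := by
    refine eventually_mem_nhdsWithin.and ((eventually_all_finite hS).2 fun x hx => ?_)
    by_cases hux : u ⬝ᵥ x = 0
    · simp [hux, hcompat x hx hux]
    · have hlim : Tendsto (fun ε : ℝ => (ε * (w ⬝ᵥ x)) ^ 2) (𝓝 0) (𝓝 0) :=
        (by fun_prop : Continuous fun ε : ℝ => (ε * (w ⬝ᵥ x)) ^ 2).tendsto' 0 0 (by simp)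
      exact nhdsWithin_le_nhds ((hlim.eventually_lt_const (by positivity)).mono fun _ => le_of_lt)
  obtain ⟨ε, hε, hεsmall⟩ := hsmall.exists
  refine ⟨(2⁻¹ : ℝ) • u + ε • w, (2⁻¹ : ℝ) • u + (-ε) • w,
    by simpa using half_add_smul_ne_smul hwu hε.ne' 0,
    by simpa using half_add_smul_ne_smul hwu (neg_ne_zero.2 hε.ne') 0,
    add_mem (smul_mem _ _ hu) (smul_mem _ _ hw), add_mem (smul_mem _ _ hu) (smul_mem _ _ hw),
    by module, fun ⟨c, _, h⟩ => half_add_smul_ne_smul hwu hε.ne' c h,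
    fun ⟨c, _, h⟩ => half_add_smul_ne_smul hwu (neg_ne_zero.2 hε.ne') c h,
    fun x hx => ?_⟩
  have h := hεsmall x hx
  change 0 ≤ (((2⁻¹ : ℝ) • u + ε • w) ⬝ᵥ x) * (((2⁻¹ : ℝ) • u + (-ε) • w) ⬝ᵥ x)
  simp only [add_dotProduct, smul_dotProduct, smul_eq_mul]
  nlinarith

lemma exists_dotProduct_ne_zero (hu : u ∈ span ℝ S) (hu0 : u ≠ 0) : ∃ x ∈ S, u ⬝ᵥ x ≠ 0 := by
  by_contra! h
  have hker : span ℝ S ≤ LinearMap.ker (dotProductBilin ℝ ℝ u) := span_le.2 h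
  exact hu0 (dotProduct_self_eq_zero.1 (hker hu))

lemma not_decomp_of_rigid (hu : u ∈ span ℝ S) (hu0 : u ≠ 0)
    (hrig : ∀ w ∈ span ℝ S, (∀ x ∈ S, u ⬝ᵥ x = 0 → w ⬝ᵥ x = 0) → ∃ t : ℝ, w = t • u) :
    ¬ Decomp S u := by
  rintro ⟨u', u'', hu'0, -, hu', hu'', hsum, hpos', -, hsign⟩
  -- on an `x` killed by `u`, the sign condition forces both summands to kill `x`
  have hcompat : ∀ x ∈ S, u ⬝ᵥ x = 0 → u' ⬝ᵥ x = 0 ∧ u'' ⬝ᵥ x = 0 := by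
    intro x hx h0
    rw [hsum, add_dotProduct] at h0
    have := hsign x hx
    change 0 ≤ (u' ⬝ᵥ x) * (u'' ⬝ᵥ x) at this
    constructor <;> nlinarith
  obtain ⟨t', ht'⟩ := hrig u' hu' fun x hx h => (hcompat x hx h).1
  obtain ⟨t'', ht''⟩ := hrig u'' hu'' fun x hx h => (hcompat x hx h).2
  obtain ⟨x, hx, hux⟩ := exists_dotProduct_ne_zero hu hu0
  have hsign := hsign x hx
  change 0 ≤ (u' ⬝ᵥ x) * (u'' ⬝ᵥ x) at hsign
  have hsum := congrArg (· ⬝ᵥ x) hsum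
  simp only [ht', ht'', add_dotProduct, smul_dotProduct, smul_eq_mul] at hsign hsum
  have ht'0 : t' ≠ 0 := by rintro rfl; exact hu'0 (by simpa using ht')
  have ht : t' + t'' = 1 := mul_right_cancel₀ hux (by linarith)
  have hprod : 0 ≤ t' * t'' :=
    (mul_nonneg_iff_of_pos_right (by positivity : 0 < (u ⬝ᵥ x) ^ 2)).1 (by linarith)
  refine hpos' ⟨t', ?_, ht'⟩
  rcases ht'0.lt_or_gt with hneg | hpos
  · nlinarith
  · exact hpos

lemma indecomp_iff (hS : S.Finite) :
    Indecomp S u ↔ u ≠ 0 ∧ u ∈ span ℝ S ∧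
      ∀ w ∈ span ℝ S, (∀ x ∈ S, u ⬝ᵥ x = 0 → w ⬝ᵥ x = 0) → ∃ t : ℝ, w = t • u := by
  refine ⟨fun ⟨hu0, hu, hnd⟩ => ⟨hu0, hu, fun w hw hcompat => ?_⟩,
    fun ⟨hu0, hu, hrig⟩ => ⟨hu0, hu, not_decomp_of_rigid hu hu0 hrig⟩⟩
  by_contra! hwu
  exact hnd (decomp_of_not_rigid hS hu hw hcompat hwu)

end Indecomposable

lemma SimpleGraph.Reachable.eq_of_forall_adj {V β : Type*} {H : SimpleGraph V} {f : V → β}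
    {x y : V} (h : H.Reachable x y) (hf : ∀ x y, H.Adj x y → f x = f y) : f x = f y := by
  obtain ⟨p⟩ := h
  induction p with
  | nil => rfl
  | cons hadj _ ih => exact (hf _ _ hadj).trans ih

section EdgeVectors

variable {n r : ℕ} {G : SimpleGraph (Fin n)} {u w : Fin n → ℝ}

open SimpleGraph ConnectedComponent

lemma dotProduct_edgeVec {i j : Fin n} (hij : i ≠ j) : u ⬝ᵥ edgeVec s(i, j) = u i + u j := by
  have hsingle : edgeVec s(i, j) = Pi.single i 1 + Pi.single j 1 := by
    ext k
    by_cases hki : k = i <;> by_cases hkj : k = j <;> simp_all [edgeVec]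
  rw [hsingle, dotProduct_add, dotProduct_single, dotProduct_single, mul_one, mul_one]

lemma forall_mem_edgeVecs {P : (Fin n → ℝ) → Prop} :
    (∀ x ∈ edgeVecs G, P x) ↔ ∀ i j, G.Adj i j → P (edgeVec s(i, j)) := by
  refine ⟨fun h i j hij => h _ ⟨s(i, j), hij, rfl⟩, ?_⟩
  rintro h _ ⟨e, he, rfl⟩
  induction e with
  | _ i j => exact h i j he

lemma forall_edgeVecs_dotProduct_iff :
    (∀ x ∈ edgeVecs G, u ⬝ᵥ x = 0 → w ⬝ᵥ x = 0) ↔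
      ∀ i j, G.Adj i j → u i + u j = 0 → w i + w j = 0 := by
  rw [forall_mem_edgeVecs]
  exact forall₂_congr fun i j => forall_congr' fun hij => by
    rw [dotProduct_edgeVec hij.ne, dotProduct_edgeVec hij.ne]

lemma indecomp_edgeVecs_iff :
    Indecomp (edgeVecs G) u ↔ u ≠ 0 ∧ u ∈ span ℝ (edgeVecs G) ∧
      ∀ w ∈ span ℝ (edgeVecs G), (∀ i j, G.Adj i j → u i + u j = 0 → w i + w j = 0) →
        ∃ t : ℝ, w = t • u := by
  simp only [indecomp_iff (S := edgeVecs G) ((Set.toFinite _).image _),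
    forall_edgeVecs_dotProduct_iff]

def bipSign (r : ℕ) : Fin n → ℝ := fun k => if (k : ℕ) < r then 1 else -1

lemma bipSign_mul_self (k : Fin n) : bipSign r k * bipSign r k = 1 := by
  unfold bipSign; split_ifs <;> norm_num

lemma bipSign_ne_zero (k : Fin n) : bipSign r k ≠ 0 :=
  left_ne_zero_of_mul_eq_one (bipSign_mul_self k)

lemma bipSign_of_adj (hbip : ∀ i j : Fin n, G.Adj i j → ((i : ℕ) < r ↔ ¬ (j : ℕ) < r))
    {i j : Fin n} (hij : G.Adj i j) : bipSign r j = -bipSign r i := by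
  have := hbip i j hij
  unfold bipSign
  split_ifs <;> simp_all

lemma add_eq_zero_iff_mul_bipSign_eq
    (hbip : ∀ i j : Fin n, G.Adj i j → ((i : ℕ) < r ↔ ¬ (j : ℕ) < r))
    {i j : Fin n} (hij : G.Adj i j) :
    w i + w j = 0 ↔ w i * bipSign r i = w j * bipSign r j := by
  rw [bipSign_of_adj hbip hij, mul_neg, ← add_eq_zero_iff_eq_neg, ← add_mul,
    mul_eq_zero_iff_right (bipSign_ne_zero i)]

lemma eq_of_mul_bipSign_eq {v : Fin n → ℝ} (h : ∀ k, w k * bipSign r k = v k * bipSign r k) :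
    w = v :=
  funext fun k => mul_right_cancel₀ (bipSign_ne_zero k) (h k)

lemma eq_smul_bipSign_of_forall {c : ℝ} (h : ∀ k, w k * bipSign r k = c) :
    w = c • bipSign r :=
  eq_of_mul_bipSign_eq fun k => by
    rw [h, Pi.smul_apply, smul_eq_mul, mul_assoc, bipSign_mul_self, mul_one]

lemma bipSign_dotProduct_self : (bipSign r : Fin n → ℝ) ⬝ᵥ bipSign r = n := by
  simp [dotProduct, bipSign_mul_self]

lemma exists_eq_smul_bipSign (hbip : ∀ i j : Fin n, G.Adj i j → ((i : ℕ) < r ↔ ¬ (j : ℕ) < r))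
    (hconn : G.Connected) (hw : ∀ i j, G.Adj i j → w i + w j = 0) :
    ∃ c : ℝ, w = c • bipSign r := by
  obtain ⟨k₀⟩ := hconn.nonempty
  exact ⟨_, eq_smul_bipSign_of_forall fun k => (hconn.preconnected k k₀).eq_of_forall_adj
    fun i j hij => (add_eq_zero_iff_mul_bipSign_eq hbip hij).1 (hw i j hij)⟩

lemma mem_span_edgeVecs_iff (hbip : ∀ i j : Fin n, G.Adj i j → ((i : ℕ) < r ↔ ¬ (j : ℕ) < r))
    (hconn : G.Connected) : u ∈ span ℝ (edgeVecs G) ↔ u ⬝ᵥ bipSign r = 0 := by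
  constructor
  · intro hu
    have hle : span ℝ (edgeVecs G) ≤ LinearMap.ker (dotProductBilin ℝ ℝ (bipSign r)) :=
      span_le.2 <| forall_mem_edgeVecs.2 fun i j hij => by
        change bipSign r ⬝ᵥ edgeVec s(i, j) = 0
        rw [dotProduct_edgeVec hij.ne, bipSign_of_adj hbip hij, add_neg_cancel]
    rw [dotProduct_comm]
    exact hle hu
  · intro hu
    by_contra hspan
    obtain ⟨f, hfu, hf⟩ := exists_dual_map_eq_bot_of_notMem hspan inferInstance
    obtain ⟨w, rfl⟩ := (dotProductEquiv ℝ (Fin n)).surjective f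
    have hw : ∀ i j, G.Adj i j → w i + w j = 0 := fun i j hij => by
      rw [← dotProduct_edgeVec hij.ne]
      exact (LinearMap.le_ker_iff_map.2 hf) (subset_span ⟨s(i, j), hij, rfl⟩)
    obtain ⟨c, rfl⟩ := exists_eq_smul_bipSign hbip hconn hw
    apply hfu
    simp [dotProduct_comm, hu]

/-- The rigidity condition of `indecomp_iff` for the edge vectors of a connected bipartite graph:
`w ⬝ᵥ bipSign r = 0` is membership in their span, and `u i + u j = u ⬝ᵥ edgeVec s(i, j)`. -/
def IsRigid (G : SimpleGraph (Fin n)) (r : ℕ) (u : Fin n → ℝ) : Prop :=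
  ∀ w : Fin n → ℝ, w ⬝ᵥ bipSign r = 0 →
    (∀ i j, G.Adj i j → u i + u j = 0 → w i + w j = 0) → ∃ t : ℝ, w = t • u

lemma indecomp_edgeVecs_iff_of_bipartite
    (hbip : ∀ i j : Fin n, G.Adj i j → ((i : ℕ) < r ↔ ¬ (j : ℕ) < r)) (hconn : G.Connected) :
    Indecomp (edgeVecs G) u ↔ u ≠ 0 ∧ u ⬝ᵥ bipSign r = 0 ∧ IsRigid G r u := by
  simp only [indecomp_edgeVecs_iff, mem_span_edgeVecs_iff hbip hconn, IsRigid]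

def signInd (r : ℕ) (s : Finset (Fin n)) : Fin n → ℝ := fun k => if k ∈ s then bipSign r k else 0

/-- The orthogonal projection of `signInd r s` onto the hyperplane `bipSign r ⬝ᵥ · = 0`. -/
def cutVec (r : ℕ) (s : Finset (Fin n)) : Fin n → ℝ :=
  signInd r s - ((#s : ℝ) / n) • bipSign r

lemma signInd_mul_bipSign (s : Finset (Fin n)) (k : Fin n) :
    signInd r s k * bipSign r k = if k ∈ s then 1 else 0 := by
  unfold signInd; split_ifs <;> simp [bipSign_mul_self]

lemma signInd_dotProduct_bipSign (s : Finset (Fin n)) : signInd r s ⬝ᵥ bipSign r = #s := by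
  simp [dotProduct, signInd_mul_bipSign]

lemma signInd_add_eq_zero (hbip : ∀ i j : Fin n, G.Adj i j → ((i : ℕ) < r ↔ ¬ (j : ℕ) < r))
    {s : Finset (Fin n)} {i j : Fin n} (hij : G.Adj i j) (hs : i ∈ s ↔ j ∈ s) :
    signInd r s i + signInd r s j = 0 := by
  by_cases hi : i ∈ s
  · simp [signInd, hi, hs.1 hi, bipSign_of_adj hbip hij]
  · simp [signInd, hi, mt hs.2 hi]

lemma cutVec_mul_bipSign (s : Finset (Fin n)) (k : Fin n) :
    cutVec r s k * bipSign r k = (if k ∈ s then 1 else 0) - (#s : ℝ) / n := by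
  rw [cutVec, Pi.sub_apply, sub_mul, signInd_mul_bipSign, Pi.smul_apply, smul_eq_mul, mul_assoc,
    bipSign_mul_self, mul_one]

lemma cutVec_dotProduct_bipSign (s : Finset (Fin n)) : cutVec r s ⬝ᵥ bipSign r = 0 := by
  rcases Nat.eq_zero_or_pos n with rfl | hn
  · simp [dotProduct]
  · rw [cutVec, sub_dotProduct, smul_dotProduct, signInd_dotProduct_bipSign]
    simp [dotProduct, bipSign_mul_self, hn.ne']

lemma cutVec_ne_zero {s : Finset (Fin n)} (hs : s.Nonempty) {k : Fin n} (hk : k ∉ s) :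
    cutVec r s ≠ 0 := by
  have hn : (0 : ℝ) < n := by exact_mod_cast k.pos
  intro h
  have := cutVec_mul_bipSign (r := r) s k
  rw [h, if_neg hk, Pi.zero_apply, zero_mul, zero_sub, zero_eq_neg] at this
  exact (div_pos (Nat.cast_pos.2 hs.card_pos) hn).ne' this

lemma cutVec_add_eq_zero (hbip : ∀ i j : Fin n, G.Adj i j → ((i : ℕ) < r ↔ ¬ (j : ℕ) < r))
    {s : Finset (Fin n)} {i j : Fin n} (hij : G.Adj i j) (hs : i ∈ s ↔ j ∈ s) :
    cutVec r s i + cutVec r s j = 0 := by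
  have hsign : bipSign r i + bipSign r j = 0 := by rw [bipSign_of_adj hbip hij, add_neg_cancel]
  simp only [cutVec, Pi.sub_apply, Pi.smul_apply, smul_eq_mul]
  linear_combination signInd_add_eq_zero hbip hij hs - ((#s : ℝ) / n) * hsign

lemma mul_bipSign_eq_of_induce_connected
    (hbip : ∀ i j : Fin n, G.Adj i j → ((i : ℕ) < r ↔ ¬ (j : ℕ) < r)) {T : Set (Fin n)}
    (hT : (G.induce T).Connected) (hw : ∀ i j, G.Adj i j → i ∈ T → j ∈ T → w i + w j = 0)
    {x y : Fin n} (hx : x ∈ T) (hy : y ∈ T) : w x * bipSign r x = w y * bipSign r y :=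
  (hT.preconnected ⟨x, hx⟩ ⟨y, hy⟩).eq_of_forall_adj (f := fun z : T => w z.1 * bipSign r z.1)
    fun a b hab => (add_eq_zero_iff_mul_bipSign_eq hbip hab).1 (hw a b hab a.2 b.2)

lemma exists_eq_smul_cutVec (hbip : ∀ i j : Fin n, G.Adj i j → ((i : ℕ) < r ↔ ¬ (j : ℕ) < r))
    {s : Finset (Fin n)} (hs : (G.induce s).Connected) (hsc : (G.induce (↑s)ᶜ).Connected)
    (hw : w ⬝ᵥ bipSign r = 0) (hws : ∀ i j, G.Adj i j → (i ∈ s ↔ j ∈ s) → w i + w j = 0) :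
    ∃ t : ℝ, w = t • cutVec r s := by
  obtain ⟨⟨x, hx⟩⟩ := hs.nonempty
  obtain ⟨⟨y, hy⟩⟩ := hsc.nonempty
  set a := w x * bipSign r x
  set d := w y * bipSign r y
  have hψ : ∀ k, w k * bipSign r k = d + (a - d) * (if k ∈ s then 1 else 0) := by
    intro k
    by_cases hk : k ∈ s
    · rw [if_pos hk]
      have := mul_bipSign_eq_of_induce_connected hbip hs
        (fun i j hij hi hj => hws i j hij (iff_of_true hi hj)) hk hx
      linarith
    · rw [if_neg hk]
      have := mul_bipSign_eq_of_induce_connected hbip hsc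
        (fun i j hij hi hj => hws i j hij (iff_of_false hi hj)) (Set.mem_compl hk) hy
      linarith
  have hbal : (n : ℝ) * d + (a - d) * #s = 0 := by
    rw [← hw, dotProduct, Finset.sum_congr rfl fun k _ => hψ k]
    simp [Finset.sum_add_distrib]
    ring
  refine ⟨a - d, eq_of_mul_bipSign_eq (r := r) fun k => ?_⟩
  have hn : (n : ℝ) ≠ 0 := by exact_mod_cast k.pos.ne'
  rw [hψ, Pi.smul_apply, smul_eq_mul, mul_assoc, cutVec_mul_bipSign]
  field_simp
  linear_combination hbal

def zeroSumGraph (G : SimpleGraph (Fin n)) (u : Fin n → ℝ) : SimpleGraph (Fin n) where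
  Adj i j := G.Adj i j ∧ u i + u j = 0
  symm := ⟨fun _ _ h => ⟨h.1.symm, by rw [add_comm]; exact h.2⟩⟩
  loopless := ⟨fun i h => G.loopless.irrefl i h.1⟩

lemma mul_bipSign_eq_of_reachable
    (hbip : ∀ i j : Fin n, G.Adj i j → ((i : ℕ) < r ↔ ¬ (j : ℕ) < r)) {x y : Fin n}
    (h : (zeroSumGraph G u).Reachable x y) : u x * bipSign r x = u y * bipSign r y :=
  h.eq_of_forall_adj fun _ _ hij => (add_eq_zero_iff_mul_bipSign_eq hbip hij.1).1 hij.2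

lemma apply_eq_zero_of_connectedComponentMk_ne
    (hbip : ∀ i j : Fin n, G.Adj i j → ((i : ℕ) < r ↔ ¬ (j : ℕ) < r)) (hrig : IsRigid G r u)
    {c c' : (zeroSumGraph G u).ConnectedComponent} (hcc : c ≠ c') {k : Fin n}
    (hk : (zeroSumGraph G u).connectedComponentMk k ≠ c)
    (hk' : (zeroSumGraph G u).connectedComponentMk k ≠ c') : u k = 0 := by
  set T := c.supp.toFinset
  set T' := c'.supp.toFinset
  -- the balanced combination of the two components is compatible with `u`, hence a multiple of it
  set w := (#T' : ℝ) • signInd r T - (#T : ℝ) • signInd r T'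
  have hw : w ⬝ᵥ bipSign r = 0 := by
    simp only [w, sub_dotProduct, smul_dotProduct, signInd_dotProduct_bipSign, smul_eq_mul]
    ring
  have hcompat : ∀ i j, G.Adj i j → u i + u j = 0 → w i + w j = 0 := by
    intro i j hij h0
    have hsame : ∀ d : (zeroSumGraph G u).ConnectedComponent,
        i ∈ d.supp.toFinset ↔ j ∈ d.supp.toFinset := by
      simp [mem_supp_iff, ConnectedComponent.eq.2 (Adj.reachable (G := zeroSumGraph G u) ⟨hij, h0⟩)]
    simp only [w, Pi.sub_apply, Pi.smul_apply, smul_eq_mul]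
    linear_combination (#T' : ℝ) * signInd_add_eq_zero hbip hij (hsame c) -
      (#T : ℝ) * signInd_add_eq_zero hbip hij (hsame c')
  obtain ⟨t, ht⟩ := hrig w hw hcompat
  obtain ⟨p, hp⟩ := c'.nonempty_supp
  have hpT' : p ∈ T' := Set.mem_toFinset.2 hp
  have hpT : p ∉ T := fun h =>
    hcc (((mem_supp_iff _ _).1 (Set.mem_toFinset.1 h)).symm.trans ((mem_supp_iff _ _).1 hp))
  have hwp : w p ≠ 0 := by
    simp only [w, Pi.sub_apply, Pi.smul_apply, smul_eq_mul, signInd, if_neg hpT,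
      if_pos hpT']
    have hT : (0 : ℝ) < #T := Nat.cast_pos.2 (Set.toFinset_nonempty.2 c.nonempty_supp).card_pos
    rw [mul_zero, zero_sub, neg_ne_zero]
    exact mul_ne_zero hT.ne' (bipSign_ne_zero p)
  have hwk : w k = 0 := by
    simp [w, signInd, hk, hk', T, T']
  have ht0 : t ≠ 0 := by
    rintro rfl
    exact hwp (by simp [ht])
  have := congrFun ht k
  rw [hwk, Pi.smul_apply, smul_eq_mul] at this
  exact (mul_eq_zero.1 this.symm).resolve_left ht0

lemma exists_two_components (hbip : ∀ i j : Fin n, G.Adj i j → ((i : ℕ) < r ↔ ¬ (j : ℕ) < r))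
    (hu0 : u ≠ 0) (hu : u ⬝ᵥ bipSign r = 0) (hrig : IsRigid G r u) :
    ∃ c c' : (zeroSumGraph G u).ConnectedComponent, c ≠ c' ∧
      ∀ k, (zeroSumGraph G u).connectedComponentMk k = c ∨
        (zeroSumGraph G u).connectedComponentMk k = c' := by
  obtain ⟨p, hp⟩ := Function.ne_iff.1 hu0
  obtain ⟨q, hq⟩ : ∃ q, (zeroSumGraph G u).connectedComponentMk q ≠
      (zeroSumGraph G u).connectedComponentMk p := by
    by_contra! h
    have hconst : u = (u p * bipSign r p) • bipSign r := eq_smul_bipSign_of_forall fun k =>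
      mul_bipSign_eq_of_reachable hbip (ConnectedComponent.exact (h k))
    have hn : (n : ℝ) ≠ 0 := by exact_mod_cast p.pos.ne'
    rw [hconst, smul_dotProduct, bipSign_dotProduct_self, smul_eq_mul,
      mul_eq_zero_iff_right hn, mul_eq_zero_iff_right (bipSign_ne_zero p)] at hu
    exact hp hu
  refine ⟨_, _, hq.symm, fun k => ?_⟩
  by_contra! hk
  exact hp (apply_eq_zero_of_connectedComponentMk_ne hbip hrig (Ne.symm hk.2) hq.symm
    (Ne.symm hk.1))

lemma exists_cut_of_indecomp (hbip : ∀ i j : Fin n, G.Adj i j → ((i : ℕ) < r ↔ ¬ (j : ℕ) < r))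
    (hconn : G.Connected) (hu : Indecomp (edgeVecs G) u) :
    ∃ s : Finset (Fin n), (G.induce s).Connected ∧ (G.induce (↑s)ᶜ).Connected ∧
      ∃ t : ℝ, t ≠ 0 ∧ u = t • cutVec r s := by
  obtain ⟨hu0, hu, hrig⟩ := (indecomp_edgeVecs_iff_of_bipartite hbip hconn).1 hu
  obtain ⟨c, c', hcc, hcover⟩ := exists_two_components hbip hu0 hu hrig
  set s := c.supp.toFinset
  have hsame : ∀ i j, (i ∈ s ↔ j ∈ s) →
      (zeroSumGraph G u).connectedComponentMk i = (zeroSumGraph G u).connectedComponentMk j := by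
    intro i j h
    simp only [s, Set.mem_toFinset, mem_supp_iff] at h
    rcases hcover i with hi | hi <;> rcases hcover j with hj | hj <;> grind
  have hcompl : (↑s : Set (Fin n))ᶜ = c'.supp := by
    ext k
    simp only [s, Set.coe_toFinset, Set.mem_compl_iff, mem_supp_iff]
    rcases hcover k with hk | hk <;> grind
  have hle : zeroSumGraph G u ≤ G := fun _ _ h => h.1
  have hconn : ∀ d : (zeroSumGraph G u).ConnectedComponent, (G.induce d.supp).Connected :=
    fun d => (maximal_connected_induce_supp d).1.mono (comap_monotone _ hle)
  have hs : (G.induce s).Connected := by rw [Set.coe_toFinset]; exact hconn c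
  have hsc : (G.induce (↑s)ᶜ).Connected := by rw [hcompl]; exact hconn c'
  obtain ⟨t, ht⟩ := exists_eq_smul_cutVec hbip hs hsc hu fun i j hij hij' =>
    (add_eq_zero_iff_mul_bipSign_eq hbip hij).2
      (mul_bipSign_eq_of_reachable hbip (ConnectedComponent.exact (hsame i j hij')))
  refine ⟨s, hs, hsc, t, ?_, ht⟩
  rintro rfl
  exact hu0 (by simpa using ht)

lemma indecomp_smul_cutVec (hbip : ∀ i j : Fin n, G.Adj i j → ((i : ℕ) < r ↔ ¬ (j : ℕ) < r))
    (hconn : G.Connected) {s : Finset (Fin n)} (hs : (G.induce s).Connected)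
    (hsc : (G.induce (↑s)ᶜ).Connected) {t : ℝ} (ht : t ≠ 0) :
    Indecomp (edgeVecs G) (t • cutVec r s) := by
  obtain ⟨⟨x, hx⟩⟩ := hs.nonempty
  obtain ⟨⟨y, hy⟩⟩ := hsc.nonempty
  refine (indecomp_edgeVecs_iff_of_bipartite hbip hconn).2
    ⟨smul_ne_zero ht (cutVec_ne_zero ⟨x, hx⟩ hy), by
      rw [smul_dotProduct, cutVec_dotProduct_bipSign, smul_zero], fun w hw hcompat => ?_⟩
  obtain ⟨t', rfl⟩ := exists_eq_smul_cutVec hbip hs hsc hw fun i j hij his =>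
    hcompat i j hij (by
      simp only [Pi.smul_apply, smul_eq_mul, ← mul_add, cutVec_add_eq_zero hbip hij his, mul_zero])
  exact ⟨t' / t, by rw [smul_smul, div_mul_cancel₀ _ ht]⟩

end EdgeVectors

lemma posEq_or_posEq_neg_iff {n : ℕ} (v u : Fin n → ℝ) :
    PosEq v u ∨ PosEq (-v) u ↔ ∃ t : ℝ, t ≠ 0 ∧ u = t • v := by
  constructor
  · rintro (⟨t, ht, rfl⟩ | ⟨t, ht, rfl⟩)
    · exact ⟨t, ht.ne', rfl⟩
    · exact ⟨-t, neg_ne_zero.2 ht.ne', by rw [smul_neg, neg_smul]⟩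
  · rintro ⟨t, ht, rfl⟩
    rcases ht.lt_or_gt with hneg | hpos
    · exact Or.inr ⟨-t, neg_pos.2 hneg, by rw [smul_neg, neg_smul, neg_neg]⟩
    · exact Or.inl ⟨t, hpos, rfl⟩

section IJ

variable {n r : ℕ} {I J : Finset (Fin n)}

lemma uIJ_eq_cutVec (hI : ∀ i ∈ I, (i : ℕ) < r) (hJ : ∀ j ∈ J, ¬ (j : ℕ) < r) :
    uIJ r I J = cutVec r (I ∪ J) := by
  have hdisj : Disjoint I J := Finset.disjoint_left.2 fun k hkI hkJ => hJ k hkJ (hI k hkI)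
  ext k
  simp only [uIJ, cutVec, signInd, bipSign, Finset.card_union_of_disjoint hdisj, Pi.sub_apply,
    Pi.smul_apply, smul_eq_mul, Finset.mem_union]
  have := hI k
  have := hJ k
  split_ifs <;> grind

lemma sdiff_union_sdiff_eq_compl (hI : ∀ i ∈ I, (i : ℕ) < r) (hJ : ∀ j ∈ J, ¬ (j : ℕ) < r) :
    ({k : Fin n | (k : ℕ) < r} \ ↑I) ∪ ({k : Fin n | ¬ (k : ℕ) < r} \ ↑J) =
      (↑(I ∪ J) : Set (Fin n))ᶜ := by
  ext k
  by_cases hk : (k : ℕ) < r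
  · have hkJ : k ∉ J := fun h => hJ k h hk
    simp [hk, hkJ]
  · have hkI : k ∉ I := fun h => hk (hI k h)
    simp [hk, hkI, not_lt.1 hk]

end IJ

theorem bipartite_G_indecomposable_general {n : ℕ} (r : ℕ)
    (G : SimpleGraph (Fin n)) (hconn : G.Connected)
    (hbip : ∀ i j : Fin n, G.Adj i j → ((i : ℕ) < r ↔ ¬ (j : ℕ) < r)) :
    ∀ u : Fin n → ℝ,
      Indecomp (edgeVecs G) u ↔
        ∃ I J : Finset (Fin n), (∀ i ∈ I, (i : ℕ) < r) ∧ (∀ j ∈ J, ¬ (j : ℕ) < r) ∧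
          (G.induce ((I : Set (Fin n)) ∪ (J : Set (Fin n)))).Connected ∧
          (G.induce (({k : Fin n | (k : ℕ) < r} \ (I : Set (Fin n))) ∪
            ({k : Fin n | ¬ (k : ℕ) < r} \ (J : Set (Fin n))))).Connected ∧
          (PosEq (uIJ r I J) u ∨ PosEq (-(uIJ r I J)) u) := by
  intro u
  constructor
  · intro hu
    obtain ⟨s, hs, hsc, t, ht, rfl⟩ := exists_cut_of_indecomp hbip hconn hu
    set I := s.filter fun k : Fin n => (k : ℕ) < r
    set J := s.filter fun k : Fin n => ¬ (k : ℕ) < r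
    have hI : ∀ i ∈ I, (i : ℕ) < r := fun i hi => (Finset.mem_filter.1 hi).2
    have hJ : ∀ j ∈ J, ¬ (j : ℕ) < r := fun j hj => (Finset.mem_filter.1 hj).2
    have hIJ : I ∪ J = s := Finset.filter_union_filter_not_eq _ _
    refine ⟨I, J, hI, hJ, ?_, ?_, ?_⟩
    · rwa [← Finset.coe_union, hIJ]
    · rwa [sdiff_union_sdiff_eq_compl hI hJ, hIJ]
    · rw [posEq_or_posEq_neg_iff, uIJ_eq_cutVec hI hJ, hIJ]
      exact ⟨t, ht, rfl⟩
  · rintro ⟨I, J, hI, hJ, hs, hsc, hu⟩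
    rw [posEq_or_posEq_neg_iff, uIJ_eq_cutVec hI hJ] at hu
    rw [← Finset.coe_union] at hs
    rw [sdiff_union_sdiff_eq_compl hI hJ] at hsc
    obtain ⟨t, ht, rfl⟩ := hu
    exact indecomp_smul_cutVec hbip hconn hs hsc ht

/-- **Lemma 4.1(I)**: for a connected bipartite graph `G` with bipartition given by
`{i | i < r}` and `{i | i ≥ r}`, the `G`-indecomposable points are exactly the points
`[± u_{I,J}]` for `I, J` as in the statement. -/
theorem bipartite_G_indecomposable {n : ℕ} (r : ℕ) (hr : r ≤ n)
    (G : SimpleGraph (Fin n)) (hconn : G.Connected)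
    (hbip : ∀ i j : Fin n, G.Adj i j → ((i : ℕ) < r ↔ ¬ (j : ℕ) < r)) :
    ∀ u : Fin n → ℝ,
      Indecomp (edgeVecs G) u ↔
        ∃ I J : Finset (Fin n), (∀ i ∈ I, (i : ℕ) < r) ∧ (∀ j ∈ J, ¬ (j : ℕ) < r) ∧
          (G.induce ((I : Set (Fin n)) ∪ (J : Set (Fin n)))).Connected ∧
          (G.induce (({k : Fin n | (k : ℕ) < r} \ (I : Set (Fin n))) ∪
            ({k : Fin n | ¬ (k : ℕ) < r} \ (J : Set (Fin n))))).Connected ∧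
          (PosEq (uIJ r I J) u ∨ PosEq (-(uIJ r I J)) u) :=
  bipartite_G_indecomposable_general r G hconn hbip
end
end

section
/- Let D be a connected oriented graph with vertex set {1,...,n}. Then the set of D-indecomposable points in ℝP_+^{n-1} consists exactly of the points [u_I] = [n·Σ_{i∈I} f_i − |I|·Σ_{i=1}^n f_i], where I is a nonempty proper subset of {1,...,n} such that the induced subgraphs of D on I and on {1,...,n}\I are both connected. -/
open scoped Classical

noncomputable section

/-- The column `v(e) = f_i - f_j` of the directed incidence matrix corresponding to an
arc `e = (i → j)`. -/
def arcVec {n : ℕ} (i j : Fin n) : Fin n → ℝ := fun k =>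
  (if k = i then 1 else 0) - (if k = j then 1 else 0)

/-- The vector `u_I = n ∑_{i∈I} f_i - |I| ∑_{i=1}^n f_i`. -/
def uI {n : ℕ} (I : Finset (Fin n)) : Fin n → ℝ := fun k =>
  (n : ℝ) * (if k ∈ I then 1 else 0) - (I.card : ℝ)

/-!
The span of the arcs is the hyperplane `∑ u = 0`, and the sign condition on a decomposition
`u = u' + u''` says that `u'` and `u''` vary in the same direction along every edge. An
indecomposable `u` takes only two values, since cutting it at an intermediate value `t` into
`min u t` and `max u t` decomposes it; so `u` is a positive multiple of `u_I`, `I` its top level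
set, and a disconnection `t ⊔ (I \ t)` of either induced subgraph would give the decomposition
`u_I = u_t + u_{I \ t}` (note `u_{Iᶜ} = -u_I`). Conversely, along an edge on which `u` is flat,
`u'' = u - u'` forces `u'` to be flat too; when both induced subgraphs are connected, `u'` is then
constant on `I` and on `Iᶜ`, so a decomposition of `u_I` has the form `c • u_I + (1 - c) • u_I`,
and one of its parts is a positive multiple of `u_I`.
-/

variable {n : ℕ}

lemma dotR_arcVec (w : Fin n → ℝ) (i j : Fin n) : dotR w (arcVec i j) = w i - w j := by
  simp [dotR, arcVec, mul_sub, Finset.sum_sub_distrib]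

lemma PosEq.apply_eq_apply_iff {u u' : Fin n → ℝ} (h : PosEq u u') {i j : Fin n} :
    u' i = u' j ↔ u i = u j := by
  obtain ⟨r, hr, rfl⟩ := h
  simp [hr.ne']

lemma posEq_smul_smul {r c : ℝ} (hr : 0 < r) (hc : 0 < c) (w : Fin n → ℝ) :
    PosEq (r • w) (c • w) :=
  ⟨c / r, div_pos hc hr, by rw [smul_smul, div_mul_cancel₀ _ hr.ne']⟩

lemma Decomp.smul {S : Set (Fin n → ℝ)} {u : Fin n → ℝ} (h : Decomp S u) {c : ℝ} (hc : c ≠ 0) :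
    Decomp S (c • u) := by
  obtain ⟨u', u'', h', h'', hS', hS'', rfl, hp', hp'', hsign⟩ := h
  have hcancel : ∀ w, PosEq (c • (u' + u'')) (c • w) → PosEq (u' + u'') w := by
    rintro w ⟨r, hr, hw⟩
    exact ⟨r, hr, smul_right_injective _ hc (by simp only [hw, smul_comm c r])⟩
  refine ⟨c • u', c • u'', smul_ne_zero hc h', smul_ne_zero hc h'', Submodule.smul_mem _ _ hS',
    Submodule.smul_mem _ _ hS'', smul_add _ _ _, fun h => hp' (hcancel _ h),
    fun h => hp'' (hcancel _ h), fun x hx => ?_⟩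
  have hdot : ∀ w, dotR (c • w) x = c * dotR w x := fun w => by
    simp [dotR, Finset.mul_sum, mul_assoc]
  rw [hdot, hdot, mul_mul_mul_comm]
  exact mul_nonneg (mul_self_nonneg c) (hsign x hx)

lemma uI_sub_uI (I : Finset (Fin n)) (a b : Fin n) :
    uI I a - uI I b = n * ((if a ∈ I then 1 else 0) - (if b ∈ I then 1 else 0)) := by
  simp only [uI]; ring

lemma sum_uI (I : Finset (Fin n)) : ∑ k, uI I k = 0 := by
  simp [uI, Finset.sum_sub_distrib]
  ring

lemma uI_univ : uI (Finset.univ : Finset (Fin n)) = 0 := by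
  funext k; simp [uI]

lemma uI_compl (I : Finset (Fin n)) : uI Iᶜ = -uI I := by
  have hcard : (Iᶜ.card : ℝ) = n - I.card := by
    rw [Finset.card_compl, Fintype.card_fin, Nat.cast_sub (by simpa using I.card_le_univ)]
  funext k
  by_cases hk : k ∈ I <;> simp [uI, hk, hcard]

lemma uI_eq_add_sdiff {I J : Finset (Fin n)} (h : J ⊆ I) : uI I = uI J + uI (I \ J) := by
  have hcard : (I.card : ℝ) = J.card + (I \ J).card := by
    rw [Finset.card_sdiff_of_subset h, Nat.cast_sub (Finset.card_le_card h)]; ring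
  funext k
  by_cases hJ : k ∈ J
  · simp [uI, hJ, h hJ, hcard]; ring
  · by_cases hI : k ∈ I <;> simp [uI, hJ, hI, hcard] <;> ring

lemma eq_smul_uI_of_sum_eq_zero {w : Fin n → ℝ} {I : Finset (Fin n)} {α β : ℝ}
    (hw : ∀ k, w k = if k ∈ I then α else β) (hsum : ∑ k, w k = 0) :
    w = ((α - β) / n) • uI I := by
  funext k
  have hn : (n : ℝ) ≠ 0 := (Nat.cast_pos.2 k.pos).ne'
  have hβ : (n : ℝ) * β + I.card * (α - β) = 0 := by
    rw [← hsum, Finset.sum_congr rfl fun k _ => (hw k).trans (by split_ifs <;> ring :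
      (if k ∈ I then α else β) = β + (α - β) * if k ∈ I then 1 else 0)]
    simp [Finset.sum_add_distrib]
    ring
  rw [hw k, Pi.smul_apply, smul_eq_mul, uI]
  split_ifs <;> field_simp <;> linarith

namespace SimpleGraph

variable {V : Type*} {G : SimpleGraph V}

lemma apply_eq_of_induce_preconnected {α : Type*} {s : Set V} (hs : (G.induce s).Preconnected)
    {f : V → α} (hf : ∀ i ∈ s, ∀ j ∈ s, G.Adj i j → f i = f j) {i j : V} (hi : i ∈ s)
    (hj : j ∈ s) : f i = f j := by
  suffices ∀ x y : s, (G.induce s).Walk x y → f x = f y from this ⟨i, hi⟩ ⟨j, hj⟩ (hs _ _).some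
  intro x y w
  induction w with
  | nil => rfl
  | cons hadj _ ih => exact (hf _ (Subtype.prop _) _ (Subtype.prop _) hadj).trans ih

lemma exists_split_of_not_induce_connected [DecidableEq V] {s : Finset V} (hs : s.Nonempty)
    (h : ¬(G.induce (s : Set V)).Connected) :
    ∃ t ⊆ s, t.Nonempty ∧ (s \ t).Nonempty ∧ ∀ i ∈ t, ∀ j ∈ s \ t, ¬G.Adj i j := by
  have : Nonempty (s : Set V) := hs.to_subtype
  obtain ⟨x, y, hxy⟩ : ∃ x y : (s : Set V), ¬(G.induce (s : Set V)).Reachable x y := by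
    simpa [connected_iff, Preconnected, this] using h
  let t := s.filter fun z => ∃ hz : z ∈ s, (G.induce s).Reachable x ⟨z, hz⟩
  refine ⟨t, Finset.filter_subset _ _, ⟨x, by simp [t]⟩,
    ⟨y, by simpa [t, y.2] using hxy⟩, fun i hi j hj hadj => ?_⟩
  obtain ⟨-, hi, hxi⟩ := Finset.mem_filter.1 hi
  obtain ⟨hjs, hjt⟩ := Finset.mem_sdiff.1 hj
  have hxj : (G.induce (s : Set V)).Reachable x ⟨j, hjs⟩ :=
    hxi.trans (Adj.reachable (G := G.induce (s : Set V)) (v := ⟨j, hjs⟩) hadj)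
  exact hjt (Finset.mem_filter.2 ⟨hjs, hjs, hxj⟩)

end SimpleGraph

def arcSet (D : Fin n → Fin n → Prop) : Set (Fin n → ℝ) := {x | ∃ i j, D i j ∧ x = arcVec i j}

section arcSet

variable {D : Fin n → Fin n → Prop}

lemma arcVec_mem_span_of_reachable {i j : Fin n} (h : (SimpleGraph.fromRel D).Reachable i j) :
    arcVec i j ∈ Submodule.span ℝ (arcSet D) := by
  obtain ⟨w⟩ := h
  induction w with
  | nil => convert Submodule.zero_mem _; funext k; simp [arcVec]
  | @cons a b c hab _ ih =>
    have hsplit : arcVec a c = arcVec a b + arcVec b c := by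
      funext k; simp only [arcVec, Pi.add_apply]; ring
    have hab' : arcVec a b ∈ Submodule.span ℝ (arcSet D) := by
      rcases hab.2 with hD | hD
      · exact Submodule.subset_span ⟨a, b, hD, rfl⟩
      · have hrev : arcVec a b = (-1 : ℝ) • arcVec b a := by
          funext k; simp only [arcVec, Pi.smul_apply, smul_eq_mul]; ring
        exact hrev ▸ Submodule.smul_mem _ _ (Submodule.subset_span ⟨b, a, hD, rfl⟩)
    exact hsplit ▸ Submodule.add_mem _ hab' ih

lemma mem_span_arcSet_iff (hconn : (SimpleGraph.fromRel D).Connected) {u : Fin n → ℝ} :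
    u ∈ Submodule.span ℝ (arcSet D) ↔ ∑ k, u k = 0 := by
  refine ⟨fun hu => ?_, fun hsum => ?_⟩
  · induction hu using Submodule.span_induction with
    | mem x hx =>
      obtain ⟨i, j, -, rfl⟩ := hx
      simp [arcVec, Finset.sum_sub_distrib]
    | zero => simp
    | add x y _ _ hx hy => simp [Finset.sum_add_distrib, hx, hy]
    | smul a x _ hx => simp [← Finset.mul_sum, hx]
  · obtain ⟨v⟩ := hconn.nonempty
    have hu : u = ∑ i, u i • arcVec i v := by
      funext k
      by_cases hk : k = v <;> simp [arcVec, mul_sub, Finset.sum_sub_distrib, hk, hsum]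
    rw [hu]
    exact Submodule.sum_mem _ fun i _ =>
      Submodule.smul_mem _ _ (arcVec_mem_span_of_reachable (hconn.preconnected i v))

lemma decomp_arcSet_iff (hconn : (SimpleGraph.fromRel D).Connected) {u : Fin n → ℝ} :
    Decomp (arcSet D) u ↔ ∃ u' u'' : Fin n → ℝ, u' ≠ 0 ∧ u'' ≠ 0 ∧
      ∑ k, u' k = 0 ∧ ∑ k, u'' k = 0 ∧ u = u' + u'' ∧ ¬PosEq u u' ∧ ¬PosEq u u'' ∧
      ∀ i j, (SimpleGraph.fromRel D).Adj i j → 0 ≤ (u' i - u' j) * (u'' i - u'' j) := by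
  have hsign : ∀ u' u'' : Fin n → ℝ, (∀ x ∈ arcSet D, 0 ≤ dotR u' x * dotR u'' x) ↔
      ∀ i j, (SimpleGraph.fromRel D).Adj i j → 0 ≤ (u' i - u' j) * (u'' i - u'' j) := by
    refine fun u' u'' => ⟨fun h i j hij => ?_, ?_⟩
    · rcases hij.2 with hD | hD
      · simpa [dotR_arcVec] using h _ ⟨i, j, hD, rfl⟩
      · have := h _ ⟨j, i, hD, rfl⟩
        rw [dotR_arcVec, dotR_arcVec] at this
        linarith
    · rintro h _ ⟨i, j, hD, rfl⟩
      rw [dotR_arcVec, dotR_arcVec]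
      by_cases hij : i = j
      · simp [hij]
      · exact h i j ⟨hij, Or.inl hD⟩
  simp only [Decomp, mem_span_arcSet_iff hconn, hsign]

lemma decomp_of_lt_of_lt (hconn : (SimpleGraph.fromRel D).Connected) {u : Fin n → ℝ}
    (hsum : ∑ k, u k = 0) {i j k : Fin n} (hij : u i < u j) (hjk : u j < u k) :
    Decomp (arcSet D) u := by
  have hn : (n : ℝ) ≠ 0 := (Nat.cast_pos.2 i.pos).ne'
  set c := (∑ l, min (u l) (u j)) / n
  have hc : ∑ l, min (u l) (u j) = n * c := (mul_div_cancel₀ _ hn).symm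
  rw [decomp_arcSet_iff hconn]
  refine ⟨fun l => min (u l) (u j) - c, fun l => max (u l) (u j) - (u j - c), fun h => ?_,
    fun h => ?_, ?_, ?_, ?_, fun h => ?_, fun h => ?_, fun a b _ => ?_⟩
  · have hi := congrFun h i
    have hj := congrFun h j
    simp [hij.le] at hi hj
    linarith
  · have hk := congrFun h k
    have hj := congrFun h j
    simp [hjk.le] at hk hj
    linarith
  · simp [Finset.sum_sub_distrib, hc]
  · have hmax : ∑ l, max (u l) (u j) = n * u j - n * c := by
      have := Finset.sum_congr rfl fun l (_ : l ∈ Finset.univ) => min_add_max (u l) (u j)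
      simp only [Finset.sum_add_distrib, hsum, hc, Finset.sum_const, Finset.card_univ,
        Fintype.card_fin, nsmul_eq_mul] at this
      linarith
    simp [Finset.sum_sub_distrib, hmax]
  · funext l
    simp only [Pi.add_apply]
    linarith [min_add_max (u l) (u j)]
  · refine hjk.ne (h.apply_eq_apply_iff.1 ?_)
    simp [hjk.le]
  · refine hij.ne (h.apply_eq_apply_iff.1 ?_)
    simp [hij.le]
  · simp only [sub_sub_sub_cancel_right]
    rcases le_total (u a) (u b) with h | h
    · exact mul_nonneg_of_nonpos_of_nonpos (sub_nonpos.2 (min_le_min_right (u j) h))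
        (sub_nonpos.2 (max_le_max_right (u j) h))
    · exact mul_nonneg (sub_nonneg.2 (min_le_min_right (u j) h))
        (sub_nonneg.2 (max_le_max_right (u j) h))

lemma decomp_uI_of_not_induce_connected (hconn : (SimpleGraph.fromRel D).Connected)
    {J : Finset (Fin n)} (hJ : J.Nonempty)
    (h : ¬((SimpleGraph.fromRel D).induce (J : Set (Fin n))).Connected) :
    Decomp (arcSet D) (uI J) := by
  obtain ⟨t, hts, ⟨i, hi⟩, ⟨j, hj⟩, hcut⟩ := SimpleGraph.exists_split_of_not_induce_connected hJ h
  have hn : (n : ℝ) ≠ 0 := (Nat.cast_pos.2 i.pos).ne'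
  obtain ⟨hjJ, hjt⟩ := Finset.mem_sdiff.1 hj
  have hij : uI J i = uI J j := by simp [uI, hts hi, hjJ]
  have hsep : ∀ {w}, w i ≠ w j → ¬PosEq (uI J) w := fun hw hp => hw (hp.apply_eq_apply_iff.2 hij)
  have hti : uI t i ≠ uI t j := by simp [uI, hi, hjt, hn]
  have htj : uI (J \ t) i ≠ uI (J \ t) j := by
    simp only [uI, Finset.mem_sdiff, hi, hj, not_true, and_false, if_false, if_true]
    intro h; exact hn (by linarith)
  rw [decomp_arcSet_iff hconn]
  refine ⟨uI t, uI (J \ t), fun h0 => hti (by simp [h0]), fun h0 => htj (by simp [h0]),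
    sum_uI t, sum_uI _, uI_eq_add_sdiff hts, hsep hti, hsep htj, fun a b hab => ?_⟩
  rw [uI_sub_uI, uI_sub_uI, mul_mul_mul_comm]
  refine mul_nonneg (mul_self_nonneg _) ?_
  by_cases ha : a ∈ t <;> by_cases hb : b ∈ t <;> by_cases ha' : a ∈ J <;> by_cases hb' : b ∈ J <;>
    first
    | exact absurd hab (hcut a ha b (Finset.mem_sdiff.2 ⟨hb', hb⟩))
    | exact absurd hab.symm (hcut b hb a (Finset.mem_sdiff.2 ⟨ha', ha⟩))
    | simp [ha, hb, ha', hb']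

lemma not_decomp_smul_uI (hconn : (SimpleGraph.fromRel D).Connected) {I : Finset (Fin n)}
    {r : ℝ} (hr : 0 < r) (hI : ((SimpleGraph.fromRel D).induce (I : Set (Fin n))).Preconnected)
    (hIc : ((SimpleGraph.fromRel D).induce (I : Set (Fin n))ᶜ).Preconnected) {i j : Fin n}
    (hi : i ∈ I) (hj : j ∉ I) : ¬Decomp (arcSet D) (r • uI I) := by
  rw [decomp_arcSet_iff hconn]
  rintro ⟨u', u'', h', h'', hsum', -, hadd, hp', hp'', hsign⟩
  have hflat : ∀ a b, (SimpleGraph.fromRel D).Adj a b → uI I a = uI I b → u' a = u' b := by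
    intro a b hab hu
    have hsplit := congrArg₂ (· - ·) (congrFun hadd a) (congrFun hadd b)
    simp only [Pi.smul_apply, smul_eq_mul, Pi.add_apply, hu, sub_self] at hsplit
    nlinarith [hsign a b hab]
  have hu' : u' = ((u' i - u' j) / n) • uI I := by
    refine eq_smul_uI_of_sum_eq_zero (fun k => ?_) hsum'
    split_ifs with hk
    · exact SimpleGraph.apply_eq_of_induce_preconnected hI
        (fun a ha b hb hab => hflat a b hab (by simp_all [uI])) hk hi
    · exact SimpleGraph.apply_eq_of_induce_preconnected hIc
        (fun a ha b hb hab => hflat a b hab (by simp_all [uI])) (s := (I : Set (Fin n))ᶜ) hk hj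
  set c := (u' i - u' j) / n
  have hu'' : u'' = (r - c) • uI I := by rw [sub_smul, ← hu', hadd, add_sub_cancel_left]
  have hc : c < 0 := lt_of_le_of_ne (not_lt.1 fun hc => hp' (hu' ▸ posEq_smul_smul hr hc _))
    fun hc => h' (by rw [hu', hc, zero_smul])
  have hrc : r - c < 0 :=
    lt_of_le_of_ne (not_lt.1 fun hc => hp'' (hu'' ▸ posEq_smul_smul hr hc _))
      fun hc => h'' (by rw [hu'', hc, zero_smul])
  linarith

lemma exists_smul_uI_of_indecomp (hconn : (SimpleGraph.fromRel D).Connected) {u : Fin n → ℝ}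
    (h : Indecomp (arcSet D) u) :
    ∃ I : Finset (Fin n), ∃ r : ℝ, 0 < r ∧ u = r • uI I ∧ I.Nonempty ∧ I ≠ Finset.univ := by
  obtain ⟨hne, hmem, hnd⟩ := h
  have hsum := (mem_span_arcSet_iff hconn).1 hmem
  have := hconn.nonempty
  obtain ⟨imax, hmax⟩ := Finite.exists_max u
  obtain ⟨imin, hmin⟩ := Finite.exists_min u
  have htwo : ∀ k, u k ≠ u imax → u k = u imin := fun k hk => by_contra fun hk' =>
    hnd (decomp_of_lt_of_lt hconn hsum (lt_of_le_of_ne (hmin k) (Ne.symm hk'))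
      (lt_of_le_of_ne (hmax k) hk))
  set I := Finset.univ.filter fun k => u k = u imax
  have hu : u = ((u imax - u imin) / n) • uI I := eq_smul_uI_of_sum_eq_zero (fun k => by
    by_cases hk : u k = u imax
    · simp [I, hk]
    · simp [I, htwo k hk]) hsum
  have hpos : 0 < u imax - u imin :=
    lt_of_le_of_ne (sub_nonneg.2 (hmin imax)) fun h => hne (by rw [hu, ← h, zero_div, zero_smul])
  exact ⟨I, _, div_pos hpos (Nat.cast_pos.2 imax.pos), hu, ⟨imax, by simp [I]⟩,
    fun hI => hne (by rw [hu, hI, uI_univ, smul_zero])⟩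

end arcSet

theorem oriented_D_indecomposable_general {n : ℕ} (D : Fin n → Fin n → Prop)
    (hconn : (SimpleGraph.fromRel D).Connected) :
    ∀ u : Fin n → ℝ,
      Indecomp {x | ∃ i j, D i j ∧ x = arcVec i j} u ↔
        ∃ I : Finset (Fin n), I.Nonempty ∧ I ≠ Finset.univ ∧
          ((SimpleGraph.fromRel D).induce (I : Set (Fin n))).Connected ∧
          ((SimpleGraph.fromRel D).induce ((I : Set (Fin n))ᶜ)).Connected ∧
          PosEq (uI I) u := by
  intro u
  constructor
  · intro h
    obtain ⟨I, r, hr, rfl, hIne, hIuniv⟩ := exists_smul_uI_of_indecomp hconn h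
    obtain ⟨j, hj⟩ : ∃ j, j ∉ I := by simpa [Finset.eq_univ_iff_forall] using hIuniv
    refine ⟨I, hIne, hIuniv, by_contra fun hI => h.2.2 ?_, by_contra fun hIc => h.2.2 ?_,
      r, hr, rfl⟩
    · exact (decomp_uI_of_not_induce_connected hconn hIne hI).smul hr.ne'
    · rw [← Finset.coe_compl] at hIc
      have := (decomp_uI_of_not_induce_connected hconn ⟨j, Finset.mem_compl.2 hj⟩ hIc).smul
        (neg_ne_zero.2 hr.ne')
      rwa [uI_compl, smul_neg, neg_smul, neg_neg] at this
  · rintro ⟨I, ⟨i, hi⟩, hIuniv, hI, hIc, r, hr, rfl⟩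
    obtain ⟨j, hj⟩ : ∃ j, j ∉ I := by simpa [Finset.eq_univ_iff_forall] using hIuniv
    have hn : (n : ℝ) ≠ 0 := (Nat.cast_pos.2 i.pos).ne'
    refine ⟨fun h0 => ?_, Submodule.smul_mem _ _ ((mem_span_arcSet_iff hconn).2 (sum_uI I)),
      not_decomp_smul_uI hconn hr hI.preconnected hIc.preconnected hi hj⟩
    have := congrArg₂ (· - ·) (congrFun h0 i) (congrFun h0 j)
    simp [← mul_sub, uI_sub_uI, hi, hj, hr.ne', hn] at this

/-- **Lemma 4.6**: for a connected oriented graph `D` on `{1,…,n}` (no loops, no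
multiple arcs), the `D`-indecomposable points are exactly the points `[u_I]` for
nonempty proper `I ⊆ {1,…,n}` with both induced subgraphs connected. -/
theorem oriented_D_indecomposable {n : ℕ} (D : Fin n → Fin n → Prop)
    (hloop : ∀ i, ¬ D i i) (hmult : ∀ i j, D i j → ¬ D j i)
    (hconn : (SimpleGraph.fromRel D).Connected) :
    ∀ u : Fin n → ℝ,
      Indecomp {x | ∃ i j, D i j ∧ x = arcVec i j} u ↔
        ∃ I : Finset (Fin n), I.Nonempty ∧ I ≠ Finset.univ ∧
          ((SimpleGraph.fromRel D).induce (I : Set (Fin n))).Connected ∧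
          ((SimpleGraph.fromRel D).induce ((I : Set (Fin n))ᶜ)).Connected ∧
          PosEq (uI I) u :=
  oriented_D_indecomposable_general D hconn
end
end

section
/- For every oriented graph D, the directed incidence matrix of D is a Farkas matrix. -/
open scoped Classical

noncomputable section

/-- The column `f_i - f_j` (over ℤ) of the directed incidence matrix corresponding to
an arc `e = (i → j)`. -/
def arcVecZ {n : ℕ} (i j : Fin n) : Fin n → ℤ := fun k =>
  (if k = i then 1 else 0) - (if k = j then 1 else 0)

/-!
Round a fractional solution one coordinate at a time. If `w = ∑ xₑ vₑ` is integral, every vertex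
meeting an arc with fractional coefficient meets at least two such arcs, since otherwise that
single coefficient would be an integer at that vertex. Counting incidences then gives at most as
many vertices `T` as fractional arcs, while the arc vectors live in a space of dimension `#T - 1`
(supported on `T`, coordinate sum zero); so the fractional arcs are linearly dependent. Moving `x`
along a dependency until a first coordinate hits `⌊xₑ⌋` or `⌈xₑ⌉` keeps `w`, stays between the
floors and ceilings, and decreases the number of fractional coordinates.
-/

open Finset

section Rounding

variable {K ι : Type*} [Field K] [LinearOrder K] [FloorRing K] [Fintype ι]

def fractSupport (x : ι → K) : Finset ι := {i | Int.fract (x i) ≠ 0}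

@[simp]
lemma mem_fractSupport {x : ι → K} {i : ι} : i ∈ fractSupport x ↔ Int.fract (x i) ≠ 0 := by
  simp [fractSupport]

variable [IsStrictOrderedRing K]

lemma floor_lt_and_lt_ceil_of_mem_fractSupport {x : ι → K} {i : ι} (hi : i ∈ fractSupport x) :
    (⌊x i⌋ : K) < x i ∧ x i < ⌈x i⌉ := by
  have hx : x i ∉ Set.range Int.cast := by
    simpa [Int.fract_eq_zero_iff] using hi
  exact ⟨Int.floor_lt_self_iff.2 hx,
    (Int.le_ceil _).lt_of_ne fun h => hx ((Int.ceil_eq_self_iff_mem _).1 h.symm)⟩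

theorem exists_add_smul_fractSupport_ssubset {x c : ι → K} (hc : c ≠ 0)
    (hsupp : ∀ i, c i ≠ 0 → i ∈ fractSupport x) :
    ∃ t : K, (∀ i, (⌊x i⌋ : K) ≤ x i + t * c i ∧ x i + t * c i ≤ ⌈x i⌉) ∧
      fractSupport (x + t • c) ⊂ fractSupport x := by
  -- moving along `c`, coordinate `i` first becomes an integer, namely `r i`, at time `δ i`
  set r : ι → ℤ := fun i => if 0 < c i then ⌈x i⌉ else ⌊x i⌋
  set δ : ι → K := fun i => (r i - x i) / c i
  have hδ : ∀ i, c i ≠ 0 → 0 < δ i ∧ x i + δ i * c i = r i := by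
    intro i hci
    obtain ⟨hfl, hce⟩ := floor_lt_and_lt_ceil_of_mem_fractSupport (hsupp i hci)
    refine ⟨?_, by simp only [δ, div_mul_cancel₀ _ hci]; ring⟩
    rcases hci.lt_or_gt with hneg | hpos
    · simp only [δ, r, if_neg hneg.not_gt]
      exact div_pos_of_neg_of_neg (by linarith) hneg
    · simp only [δ, r, if_pos hpos]
      exact div_pos (by linarith) hpos
  obtain ⟨i₀, hi₀, hmin⟩ := exists_min_image {i | c i ≠ 0} δ
    (by simpa [Finset.Nonempty, Function.ne_iff] using hc)
  have hci₀ : c i₀ ≠ 0 := (mem_filter.1 hi₀).2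
  obtain ⟨ht, hi₀r⟩ := hδ i₀ hci₀
  refine ⟨δ i₀, fun i => ?_, ?_⟩
  · by_cases hci : c i = 0
    · simp [hci, Int.floor_le, Int.le_ceil]
    have hle : δ i₀ ≤ δ i := hmin i (by simpa using hci)
    obtain ⟨-, hir⟩ := hδ i hci
    rcases lt_or_gt_of_ne hci with hneg | hpos
    · simp only [r, if_neg hneg.not_gt] at hir
      constructor <;> nlinarith [Int.le_ceil (x i)]
    · simp only [r, if_pos hpos] at hir
      constructor <;> nlinarith [Int.floor_le (x i)]
  · refine (ssubset_iff_of_subset fun i hi => ?_).2 ⟨i₀, hsupp i₀ hci₀, ?_⟩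
    · by_cases hci : c i = 0
      · simpa [hci] using hi
      · exact hsupp i hci
    · simp [hi₀r]

theorem exists_int_combination_of_not_linearIndepOn {M : Type*} [AddCommGroup M] [Module K M]
    (v : ι → M) (m : M)
    (hdep : ∀ x : ι → K, ∑ i, x i • v i = m → (fractSupport x).Nonempty →
      ¬ LinearIndepOn K v (fractSupport x))
    (x : ι → K) (hx : ∑ i, x i • v i = m) :
    ∃ y : ι → ℤ, (∀ i, ⌊x i⌋ ≤ y i ∧ y i ≤ ⌈x i⌉) ∧ ∑ i, (y i : K) • v i = m := by
  by_cases hfrac : (fractSupport x).Nonempty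
  · obtain ⟨f, hf, i₁, hi₁, hfi₁⟩ := not_linearIndepOn_finset_iff.1 (hdep x hx hfrac)
    set c : ι → K := fun i => if i ∈ fractSupport x then f i else 0
    have hc : c ≠ 0 := Function.ne_iff.2 ⟨i₁, (if_pos hi₁).trans_ne hfi₁⟩
    obtain ⟨t, hbound, hsub⟩ := exists_add_smul_fractSupport_ssubset (x := x) hc
      fun i hci => by_contra fun hi => hci (if_neg hi)
    have hx' : ∑ i, (x + t • c) i • v i = m := by
      simp only [Pi.add_apply, Pi.smul_apply, add_smul, sum_add_distrib, smul_eq_mul, mul_smul,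
        ← smul_sum, hx, c, ite_smul, zero_smul, sum_ite_mem, univ_inter, hf, smul_zero, add_zero]
    obtain ⟨y, hy, hym⟩ := exists_int_combination_of_not_linearIndepOn v m hdep _ hx'
    exact ⟨y, fun i => ⟨(Int.le_floor.2 (hbound i).1).trans (hy i).1,
      (hy i).2.trans (Int.ceil_le.2 (hbound i).2)⟩, hym⟩
  · have hint : ∀ i, (⌊x i⌋ : K) = x i := fun i => by
      by_contra h
      refine hfrac ⟨i, mem_fractSupport.2 ?_⟩
      rw [← Int.self_sub_floor, sub_ne_zero]
      exact Ne.symm h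
    refine ⟨fun i => ⌊x i⌋, fun i => ⟨le_rfl, Int.floor_le_ceil _⟩, ?_⟩
    rw [← hx]
    exact sum_congr rfl fun i _ => by rw [hint i]
termination_by (fractSupport x).card
decreasing_by exact card_lt_card hsub

end Rounding

section Incidence

variable {n : ℕ}

def endpoints {V : Type*} [DecidableEq V] (p : V × V) : Finset V := {p.1, p.2}

lemma arcVecZ_eq_zero_of_notMem_endpoints {p : Fin n × Fin n} {k : Fin n}
    (hk : k ∉ endpoints p) : arcVecZ p.1 p.2 k = 0 := by
  simp only [endpoints, mem_insert, mem_singleton, not_or] at hk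
  simp [arcVecZ, hk.1, hk.2]

lemma isUnit_arcVecZ {p : Fin n × Fin n} (hp : p.1 ≠ p.2) {k : Fin n} (hk : k ∈ endpoints p) :
    IsUnit (arcVecZ p.1 p.2 k) := by
  rcases mem_insert.1 hk with rfl | hk
  · simp [arcVecZ, hp]
  · rw [mem_singleton.1 hk]
    simp [arcVecZ, hp.symm]

lemma sum_arcVecZ (i j : Fin n) : ∑ k, arcVecZ i j k = 0 := by
  simp [arcVecZ, sum_sub_distrib]

def arcVecQ (p : Fin n × Fin n) : Fin n → ℚ := fun k => (arcVecZ p.1 p.2 k : ℚ)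

variable {ι : Type*} [Fintype ι] (ends : ι → Fin n × Fin n)

theorem exists_ne_mem_fractSupport_of_mem_endpoints (hloop : ∀ e, (ends e).1 ≠ (ends e).2)
    {x : ι → ℚ} {w : Fin n → ℤ} (hw : ∑ e, x e • arcVecQ (ends e) = fun k => (w k : ℚ))
    {e₀ : ι} (he₀ : e₀ ∈ fractSupport x) {k : Fin n} (hk : k ∈ endpoints (ends e₀)) :
    ∃ e ∈ fractSupport x, e ≠ e₀ ∧ k ∈ endpoints (ends e) := by
  by_contra! hlone
  set a := arcVecZ (ends e₀).1 (ends e₀).2 k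
  set m := w k - ∑ e, ⌊x e⌋ * arcVecZ (ends e).1 (ends e).2 k
  have hsingle :
      ∑ e, Int.fract (x e) * arcVecZ (ends e).1 (ends e).2 k = Int.fract (x e₀) * a := by
    refine sum_eq_single e₀ (fun e _ he => ?_) (by simp)
    by_cases hfe : e ∈ fractSupport x
    · simp [arcVecZ_eq_zero_of_notMem_endpoints (hlone e hfe he)]
    · simp_all
  have hint : ∑ e, Int.fract (x e) * arcVecZ (ends e).1 (ends e).2 k = (m : ℚ) := by
    have hwk := congrFun hw k
    simp only [Finset.sum_apply, Pi.smul_apply, arcVecQ, smul_eq_mul] at hwk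
    simp only [m, ← Int.self_sub_floor, sub_mul, sum_sub_distrib, hwk]
    push_cast
    rfl
  have hfract : Int.fract (x e₀) = ((m * a : ℤ) : ℚ) := by
    have hsq : (a : ℚ) * a = 1 := by
      exact_mod_cast Int.isUnit_mul_self (isUnit_arcVecZ (hloop e₀) hk)
    rw [Int.cast_mul, ← hint, hsingle, mul_assoc, hsq, mul_one]
  have hzero : Int.fract (x e₀) = 0 := by rw [← Int.fract_fract, hfract, Int.fract_intCast]
  exact mem_fractSupport.1 he₀ hzero

theorem not_linearIndepOn_arcVecQ_of_forall_exists_ne {F : Finset ι} (hF : F.Nonempty)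
    (hdeg : ∀ e₀ ∈ F, ∀ k ∈ endpoints (ends e₀), ∃ e ∈ F, e ≠ e₀ ∧ k ∈ endpoints (ends e)) :
    ¬ LinearIndepOn ℚ (fun e => arcVecQ (ends e)) F := by
  set T := F.biUnion fun e => endpoints (ends e)
  have hTF : #T ≤ #F := by
    have := card_mul_le_card_mul (fun k e => k ∈ endpoints (ends e))
      (s := T) (t := F) (m := 2) (n := 2) (fun k hk => ?_) (fun e _ => ?_)
    · omega
    · obtain ⟨e₀, he₀, hk₀⟩ := mem_biUnion.1 hk
      obtain ⟨e, he, hne, hk⟩ := hdeg e₀ he₀ k hk₀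
      calc 2 = #{e, e₀} := (card_pair hne).symm
        _ ≤ _ := card_le_card (by
          simp only [insert_subset_iff, singleton_subset_iff, bipartiteAbove, mem_filter]
          exact ⟨⟨he, hk⟩, he₀, hk₀⟩)
    · exact (card_le_card fun k hk => (mem_filter.1 hk).2).trans card_le_two
  obtain ⟨e₀, he₀⟩ := hF
  obtain ⟨k₀, hk₀⟩ : T.Nonempty := ⟨(ends e₀).1, mem_biUnion.2 ⟨e₀, he₀, by simp [endpoints]⟩⟩
  -- a combination of the arc vectors vanishes off `T` and has coordinate sum zero,
  -- so it is determined by its restriction to `T.erase k₀`, a space of dimension `#T - 1 < #F`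
  set Φ : (F → ℚ) →ₗ[ℚ] (T.erase k₀ → ℚ) := LinearMap.funLeft ℚ ℚ Subtype.val ∘ₗ
    Fintype.linearCombination ℚ fun e : F => arcVecQ (ends e)
  obtain ⟨g, hg, hg0⟩ := (Submodule.ne_bot_iff _).1 (LinearMap.ker_ne_bot_of_finrank_lt (f := Φ) (by
    simp only [Module.finrank_fintype_fun_eq_card, Fintype.card_coe, card_erase_of_mem hk₀]
    have := card_pos.2 ⟨k₀, hk₀⟩
    omega))
  set z : Fin n → ℚ := ∑ e : F, g e • arcVecQ (ends e)
  have hz_sum : ∑ k, z k = 0 := by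
    simp only [z, Finset.sum_apply, Pi.smul_apply, smul_eq_mul, arcVecQ]
    rw [sum_comm]
    simp [← mul_sum, ← Int.cast_sum, sum_arcVecZ]
  have hz_ne : ∀ k ≠ k₀, z k = 0 := by
    intro k hk
    by_cases hkT : k ∈ T
    · exact congrFun (LinearMap.mem_ker.1 hg) ⟨k, mem_erase.2 ⟨hk, hkT⟩⟩
    · simp only [z, Finset.sum_apply]
      refine sum_eq_zero fun e _ => ?_
      have : k ∉ endpoints (ends e) := fun h => hkT (mem_biUnion.2 ⟨e, e.2, h⟩)
      simp [arcVecQ, arcVecZ_eq_zero_of_notMem_endpoints this]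
  have hz : z = 0 := by
    funext k
    by_cases hk : k = k₀
    · rw [hk, Pi.zero_apply, ← hz_sum, sum_eq_single k₀ (fun k _ hk => hz_ne k hk) (by simp)]
    · exact hz_ne k hk
  intro hli
  exact hg0 (funext (Fintype.linearIndependent_iff.1 hli g hz))

end Incidence

theorem oriented_incidence_farkas_general {n : ℕ} (D : Fin n → Fin n → Prop)
    (hloop : ∀ i, ¬ D i i) :
    FarkasRelated (fun e : {p : Fin n × Fin n // D p.1 p.2} => arcVecZ e.1.1 e.1.2) := by
  rintro a b - w - ⟨x, hxab, hxw⟩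
  have hends : ∀ e : {p : Fin n × Fin n // D p.1 p.2}, e.1.1 ≠ e.1.2 :=
    fun e h => hloop e.1.1 (by simpa [← h] using e.2)
  obtain ⟨y, hy, hyw⟩ := exists_int_combination_of_not_linearIndepOn
    (fun e : {p : Fin n × Fin n // D p.1 p.2} => arcVecQ e.1) (fun k => (w k : ℚ))
    (fun x' hx' hfrac => not_linearIndepOn_arcVecQ_of_forall_exists_ne Subtype.val hfrac
      fun _ he₀ _ hk => exists_ne_mem_fractSupport_of_mem_endpoints Subtype.val hends hx' he₀ hk)
    x hxw.symm
  refine ⟨y, fun e => ⟨(Int.le_floor.2 (hxab e).1).trans (hy e).1,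
    (hy e).2.trans (Int.ceil_le.2 (hxab e).2)⟩, funext fun k => ?_⟩
  have hyk := congrFun hyw k
  simp only [Finset.sum_apply, Pi.smul_apply, arcVecQ, smul_eq_mul] at hyk
  simp only [Finset.sum_apply, Pi.smul_apply, smul_eq_mul]
  exact_mod_cast hyk.symm

/-- **Proposition 4.7**: for every oriented graph `D` (no loops, no multiple arcs), the
columns of the directed incidence matrix of `D` are Farkas-related, i.e. the directed
incidence matrix is a Farkas matrix. -/
theorem oriented_incidence_farkas {n : ℕ} (D : Fin n → Fin n → Prop)
    (hloop : ∀ i, ¬ D i i) (hmult : ∀ i j, D i j → ¬ D j i) :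
    FarkasRelated (fun e : {p : Fin n × Fin n // D p.1 p.2} => arcVecZ e.1.1 e.1.2) :=
  oriented_incidence_farkas_general D hloop
end
end
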